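/- arXiv:2112.13487 — 6 statements merged into one kernel-verified Lean document; each statement's English description precedes it below -/
import Mathlib

section
/- Let Π be a measurable space, let N ≥ 2 be an integer, and let α, β, δ ≥ 0 and γ > 0. For i = 1,…,N let g_i : Π → [0,∞) and d_i : Π → [0,∞) be bounded measurable functions (to be interpreted as the regret function π ↦ f^{M_i}(π_{M_i}) − f^{M_i}(π) and the information function π ↦ D_H²(M_i(π), M̄(π)) of a family of models M_1,…,M_N relative to a reference model M̄). Suppose there exist measurable functions u_i, v_i : Π → [0,1] with ∑_{i=1}^N u_i(π) ≤ N/2 and ∑_{i=1}^N v_i(π) ≤ 1 for every π ∈ Π, such that g_i(π) ≥ α·(1 − u_i(π)) and d_i(π) ≤ β·v_i(π) + δ for all i and all π. Then for every probability measure p on Π: max_{1≤i≤N} ∫ (g_i(π) − γ·d_i(π)) dp(π) ≥ α/2 − γ·(β/N + δ). -/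
open MeasureTheory

/-! If every decision has low regret for at most half of the models and yields information
about at most one of them, then summing over the models gives, pointwise in the decision,
`∑ᵢ (gᵢ - γ dᵢ) ≥ N α / 2 - γ (β + N δ)`. Integrating against `p` and averaging over the `N`
models produces one model whose regret/information tradeoff is at least the average. -/

section PointwiseSums

variable {ι : Type*} [Fintype ι]

theorem card_mul_half_le_sum_of_mul_one_sub_le {α : ℝ} {g u : ι → ℝ} (hα : 0 ≤ α)
    (hu : ∑ i, u i ≤ Fintype.card ι / 2) (hg : ∀ i, α * (1 - u i) ≤ g i) :
    Fintype.card ι * α / 2 ≤ ∑ i, g i :=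
  calc (Fintype.card ι : ℝ) * α / 2 ≤ α * (Fintype.card ι - ∑ i, u i) := by nlinarith
    _ = ∑ i, α * (1 - u i) := by simp [Finset.mul_sum, mul_sub, Finset.sum_sub_distrib, mul_comm]
    _ ≤ ∑ i, g i := Finset.sum_le_sum fun i _ => hg i

theorem sum_le_add_card_mul_of_le_mul_add {β δ : ℝ} {d v : ι → ℝ} (hβ : 0 ≤ β)
    (hv : ∑ i, v i ≤ 1) (hd : ∀ i, d i ≤ β * v i + δ) :
    ∑ i, d i ≤ β + Fintype.card ι * δ :=
  calc ∑ i, d i ≤ ∑ i, (β * v i + δ) := Finset.sum_le_sum fun i _ => hd i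
    _ = β * ∑ i, v i + Fintype.card ι * δ := by
      simp [Finset.sum_add_distrib, Finset.mul_sum]
    _ ≤ β + Fintype.card ι * δ := by nlinarith

end PointwiseSums

theorem exists_le_integral_of_card_mul_le_sum {X ι : Type*} [MeasurableSpace X] [Fintype ι]
    [Nonempty ι] {μ : Measure X} [IsProbabilityMeasure μ] {f : ι → X → ℝ}
    (hf : ∀ i, Integrable (f i) μ) {c : ℝ} (hc : ∀ x, Fintype.card ι * c ≤ ∑ i, f i x) :
    ∃ i, c ≤ ∫ x, f i x ∂μ := by
  obtain ⟨i, -, hi⟩ := Finset.exists_le_of_sum_le (s := Finset.univ) (f := fun _ => c)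
    (g := fun i => ∫ x, f i x ∂μ) Finset.univ_nonempty <| by
      rw [← integral_finsetSum _ fun i _ => hf i]
      calc ∑ _i : ι, c = ∫ _ : X, Fintype.card ι * c ∂μ := by simp
        _ ≤ ∫ x, ∑ i, f i x ∂μ :=
          integral_mono (integrable_const _) (integrable_finsetSum _ fun i _ => hf i) hc
  exact ⟨i, hi⟩

theorem integrable_of_nonneg_of_le {X : Type*} [MeasurableSpace X] {μ : Measure X}
    [IsFiniteMeasure μ] {f : X → ℝ} (hf : Measurable f) (h0 : ∀ x, 0 ≤ f x) {C : ℝ}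
    (hC : ∀ x, f x ≤ C) : Integrable f μ :=
  .of_bound hf.aestronglyMeasurable C <| .of_forall fun x => by
    rw [Real.norm_eq_abs, abs_of_nonneg (h0 x)]
    exact hC x

theorem hard_family_lower_bound_general {X : Type*} [MeasurableSpace X] (N : ℕ) (hN : 2 ≤ N)
    (α β δ γ : ℝ) (hα : 0 ≤ α) (hβ : 0 ≤ β) (hγ : 0 < γ)
    (g d u v : Fin N → X → ℝ)
    (hg_meas : ∀ i, Measurable (g i)) (hd_meas : ∀ i, Measurable (d i))
    (hg_nonneg : ∀ i x, 0 ≤ g i x) (hd_nonneg : ∀ i x, 0 ≤ d i x)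
    (hg_bdd : ∃ C : ℝ, ∀ i x, g i x ≤ C) (hd_bdd : ∃ C : ℝ, ∀ i x, d i x ≤ C)
    (hu_sum : ∀ x, (∑ i, u i x) ≤ (N : ℝ) / 2)
    (hv_sum : ∀ x, (∑ i, v i x) ≤ 1)
    (h_reg : ∀ i x, α * (1 - u i x) ≤ g i x)
    (h_info : ∀ i x, d i x ≤ β * v i x + δ)
    (p : Measure X) [IsProbabilityMeasure p] :
    ∃ i : Fin N, α / 2 - γ * (β / (N : ℝ) + δ) ≤ ∫ x, (g i x - γ * d i x) ∂p := by
  obtain ⟨Cg, hCg⟩ := hg_bdd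
  obtain ⟨Cd, hCd⟩ := hd_bdd
  have : NeZero N := ⟨by omega⟩
  refine exists_le_integral_of_card_mul_le_sum (fun i =>
    (integrable_of_nonneg_of_le (hg_meas i) (hg_nonneg i) (hCg i)).sub
      ((integrable_of_nonneg_of_le (hd_meas i) (hd_nonneg i) (hCd i)).const_mul γ)) fun x => ?_
  have hregret := card_mul_half_le_sum_of_mul_one_sub_le hα (by simpa using hu_sum x)
    (h_reg · x)
  have hinfo := sum_le_add_card_mul_of_le_mul_add hβ (hv_sum x) (h_info · x)
  simp only [Fintype.card_fin] at hregret hinfo ⊢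
  have hN0 : (N : ℝ) ≠ 0 := NeZero.ne _
  calc (N : ℝ) * (α / 2 - γ * (β / N + δ)) = N * α / 2 - γ * (β + N * δ) := by
        field_simp
    _ ≤ ∑ i, g i x - γ * ∑ i, d i x := by nlinarith
    _ = ∑ i, (g i x - γ * d i x) := by rw [Finset.sum_sub_distrib, Finset.mul_sum]

/-- regret/information lower bound for an `(α,β,δ)`-family.
`g i` is the regret function of model `i` and `d i` its information
(squared Hellinger) function relative to the reference model. -/
theorem hard_family_lower_bound {X : Type*} [MeasurableSpace X] (N : ℕ) (hN : 2 ≤ N)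
    (α β δ γ : ℝ) (hα : 0 ≤ α) (hβ : 0 ≤ β) (hδ : 0 ≤ δ) (hγ : 0 < γ)
    (g d u v : Fin N → X → ℝ)
    (hg_meas : ∀ i, Measurable (g i)) (hd_meas : ∀ i, Measurable (d i))
    (hu_meas : ∀ i, Measurable (u i)) (hv_meas : ∀ i, Measurable (v i))
    (hg_nonneg : ∀ i x, 0 ≤ g i x) (hd_nonneg : ∀ i x, 0 ≤ d i x)
    (hg_bdd : ∃ C : ℝ, ∀ i x, g i x ≤ C) (hd_bdd : ∃ C : ℝ, ∀ i x, d i x ≤ C)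
    (hu_mem : ∀ i x, u i x ∈ Set.Icc (0 : ℝ) 1)
    (hv_mem : ∀ i x, v i x ∈ Set.Icc (0 : ℝ) 1)
    (hu_sum : ∀ x, (∑ i, u i x) ≤ (N : ℝ) / 2)
    (hv_sum : ∀ x, (∑ i, v i x) ≤ 1)
    (h_reg : ∀ i x, α * (1 - u i x) ≤ g i x)
    (h_info : ∀ i x, d i x ≤ β * v i x + δ)
    (p : Measure X) [IsProbabilityMeasure p] :
    ∃ i : Fin N, α / 2 - γ * (β / (N : ℝ) + δ) ≤ ∫ x, (g i x - γ * d i x) ∂p :=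
  hard_family_lower_bound_general N hN α β δ γ hα hβ hγ g d u v hg_meas hd_meas hg_nonneg hd_nonneg
    hg_bdd hd_bdd hu_sum hv_sum h_reg h_info p
end

section
/- Fix an integer A ≥ 1 and γ > 0. Let (Ω, 𝔉, μ) be a probability space, let F : Ω → (Fin A → ℝ) be measurable with ω ↦ F(ω)(π) and ω ↦ (F(ω)(π))² integrable for every π ∈ Fin A, and let a* : Ω → Fin A be measurable with F(ω)(a*(ω)) = max_{π} F(ω)(π) for every ω. Define the posterior-sampling distribution p on Fin A by p(π) := μ({ω : a*(ω) = π}). Then for every function f̄ : Fin A → ℝ: ∑_{π ∈ Fin A} p(π) · ∫ [ F(ω)(a*(ω)) − F(ω)(π) − γ·(F(ω)(π) − f̄(π))² ] dμ(ω) ≤ A/γ. -/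
/-!
Write `S π = {a* = π}` and `p π = μ S π`. Because `p` is the law of `a*`, the expected regret
`∑ π, p π * 𝔼[F a* - F π]` is `∑ π, Cov(𝟙_{S π}, F π)`, and a covariance does not change when
`F π` is recentred at `f̄ π`. AM-GM with weight `γ * p π` bounds each covariance by
`γ * p π * 𝔼[(F π - f̄ π)²] + Var(𝟙_{S π}) / (4 * γ * p π)`, and `Var(𝟙_{S π}) = p π (1 - p π) ≤ p π`,
so each arm contributes at most `1 / (4 * γ)` beyond the squared-error term.
-/

open MeasureTheory

section Fibers

variable {Ω ι : Type*} [Fintype ι]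

lemma eval_eq_sum_indicator_fiber (a : Ω → ι) (G : ι → Ω → ℝ) :
    (fun ω => G (a ω) ω) = fun ω => ∑ i, (a ⁻¹' {i}).indicator (G i) ω := by
  ext ω
  rw [Finset.sum_eq_single (a ω)]
  · simp
  · exact fun i _ hi => Set.indicator_of_notMem (fun h => hi h.symm) _
  · simp

variable [MeasurableSpace Ω] {μ : Measure Ω} [MeasurableSpace ι] [MeasurableSingletonClass ι]
  {a : Ω → ι} {G : ι → Ω → ℝ}

lemma integrable_eval_of_fintype (ha : Measurable a) (hG : ∀ i, Integrable (G i) μ) :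
    Integrable (fun ω => G (a ω) ω) μ := by
  rw [eval_eq_sum_indicator_fiber]
  exact integrable_finsetSum _ fun i _ => (hG i).indicator (ha (measurableSet_singleton i))

lemma integral_eval_eq_sum_setIntegral_fiber (ha : Measurable a)
    (hG : ∀ i, Integrable (G i) μ) :
    ∫ ω, G (a ω) ω ∂μ = ∑ i, ∫ ω in a ⁻¹' {i}, G i ω ∂μ := by
  rw [eval_eq_sum_indicator_fiber,
    integral_finsetSum _ fun i _ => (hG i).indicator (ha (measurableSet_singleton i))]
  exact Finset.sum_congr rfl fun i _ => integral_indicator (ha (measurableSet_singleton i))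

end Fibers

section Covariance

variable {Ω : Type*} [MeasurableSpace Ω] {μ : Measure Ω}

lemma integral_mul_le_mul_integral_sq_add_div {X g : Ω → ℝ} {c : ℝ} (hc : 0 < c)
    (hXg : Integrable (fun ω => X ω * g ω) μ) (hX2 : Integrable (fun ω => X ω ^ 2) μ)
    (hg2 : Integrable (fun ω => g ω ^ 2) μ) :
    ∫ ω, X ω * g ω ∂μ ≤ c * ∫ ω, g ω ^ 2 ∂μ + (∫ ω, X ω ^ 2 ∂μ) / (4 * c) := by
  have amgm : ∀ ω, X ω * g ω ≤ c * g ω ^ 2 + X ω ^ 2 / (4 * c) := fun ω => by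
    rw [← sub_nonneg]
    have key : 0 ≤ (2 * c * g ω - X ω) ^ 2 / (4 * c) := by positivity
    convert key using 1
    field_simp
    ring
  calc ∫ ω, X ω * g ω ∂μ ≤ ∫ ω, (c * g ω ^ 2 + X ω ^ 2 / (4 * c)) ∂μ :=
        integral_mono hXg ((hg2.const_mul c).add (hX2.div_const _)) amgm
    _ = c * ∫ ω, g ω ^ 2 ∂μ + (∫ ω, X ω ^ 2 ∂μ) / (4 * c) := by
        rw [integral_add (hg2.const_mul c) (hX2.div_const _), integral_const_mul, integral_div]

variable [IsProbabilityMeasure μ] {S : Set Ω} {g : Ω → ℝ}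

lemma setIntegral_sub_measureReal_mul_integral_le (hS : MeasurableSet S)
    (hg : Integrable g μ) (hg2 : Integrable (fun ω => g ω ^ 2) μ) {γ : ℝ} (hγ : 0 < γ) :
    ∫ ω in S, g ω ∂μ - μ.real S * ∫ ω, g ω ∂μ
      ≤ γ * μ.real S * ∫ ω, g ω ^ 2 ∂μ + 1 / (4 * γ) := by
  set p := μ.real S
  rcases measureReal_nonneg.eq_or_lt with hp | hp
  · have hS0 : μ S = 0 := (measureReal_eq_zero_iff).mp hp.symm
    rw [setIntegral_measure_zero _ hS0, show p = 0 from hp.symm]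
    norm_num
    positivity
  set X : Ω → ℝ := fun ω => S.indicator 1 ω - p
  have hXg : (fun ω => X ω * g ω) = fun ω => S.indicator g ω - p * g ω := by
    ext ω
    by_cases h : ω ∈ S
    · simp [X, h]
      ring
    · simp [X, h]
  have hX2 : (fun ω => X ω ^ 2) = fun ω => S.indicator (fun _ => 1 - 2 * p) ω + p ^ 2 := by
    ext ω
    by_cases h : ω ∈ S
    · simp [X, h]
      ring
    · simp [X, h]
  have hcov : ∫ ω, X ω * g ω ∂μ = ∫ ω in S, g ω ∂μ - p * ∫ ω, g ω ∂μ := by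
    rw [hXg, integral_sub (hg.indicator hS) (hg.const_mul p), integral_indicator hS,
      integral_const_mul]
  have hvar : ∫ ω, X ω ^ 2 ∂μ = p * (1 - p) := by
    rw [hX2, integral_add ((integrable_const _).indicator hS) (integrable_const _),
      integral_indicator_const _ hS, integral_const]
    simp only [probReal_univ, smul_eq_mul]
    ring
  have key := integral_mul_le_mul_integral_sq_add_div (mul_pos hγ hp)
    (by rw [hXg]; exact (hg.indicator hS).sub (hg.const_mul p))
    (by rw [hX2]; exact ((integrable_const _).indicator hS).add (integrable_const _)) hg2
  rw [hcov, hvar] at key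
  have hrest : p * (1 - p) / (4 * (γ * p)) ≤ 1 / (4 * γ) := by
    rw [div_le_div_iff₀ (by positivity) (by positivity)]
    nlinarith [sq_nonneg p]
  linarith

lemma setIntegral_sub_measureReal_mul_integral_sub_const (hg : Integrable g μ) (b : ℝ) :
    ∫ ω in S, (g ω - b) ∂μ - μ.real S * ∫ ω, (g ω - b) ∂μ
      = ∫ ω in S, g ω ∂μ - μ.real S * ∫ ω, g ω ∂μ := by
  rw [integral_sub hg.integrableOn (integrable_const b), integral_sub hg (integrable_const b),
    setIntegral_const, integral_const, probReal_univ]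
  simp only [smul_eq_mul]
  ring

end Covariance

theorem posterior_sampling_dec_bound_general (A : ℕ) (γ : ℝ) (hγ : 0 < γ)
    {Ω : Type*} [MeasurableSpace Ω] (μ : Measure Ω) [IsProbabilityMeasure μ]
    (F : Ω → Fin A → ℝ)
    (hF_int : ∀ π : Fin A, Integrable (fun ω => F ω π) μ)
    (hF_sq_int : ∀ π : Fin A, Integrable (fun ω => (F ω π) ^ 2) μ)
    (astar : Ω → Fin A) (ha_meas : Measurable astar)
    (fbar : Fin A → ℝ) :
    (∑ π : Fin A, (μ {ω | astar ω = π}).toReal *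
        ∫ ω, (F ω (astar ω) - F ω π - γ * (F ω π - fbar π) ^ 2) ∂μ) ≤ (A : ℝ) / γ := by
  set p : Fin A → ℝ := fun π => μ.real (astar ⁻¹' {π})
  set V : Fin A → ℝ := fun π => ∫ ω, (F ω π - fbar π) ^ 2 ∂μ
  have hS : ∀ π, MeasurableSet (astar ⁻¹' {π}) := fun π => ha_meas (measurableSet_singleton π)
  have hp_sum : ∑ π, p π = 1 := by
    rw [sum_measureReal_preimage_singleton _ fun π _ => hS π]
    simp
  have hFa_int : Integrable (fun ω => F ω (astar ω)) μ :=
    integrable_eval_of_fintype ha_meas hF_int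
  have hV_int : ∀ π, Integrable (fun ω => (F ω π - fbar π) ^ 2) μ := fun π => by
    simp_rw [sub_sq]
    exact ((hF_sq_int π).sub ((hF_int π).const_mul _ |>.mul_const _)).add (integrable_const _)
  have hinner : ∀ π, ∫ ω, (F ω (astar ω) - F ω π - γ * (F ω π - fbar π) ^ 2) ∂μ
      = ∫ ω, F ω (astar ω) ∂μ - ∫ ω, F ω π ∂μ - γ * V π := fun π => by
    have hregret : Integrable (fun ω => F ω (astar ω) - F ω π) μ := hFa_int.sub (hF_int π)
    rw [integral_sub hregret ((hV_int π).const_mul γ), integral_sub hFa_int (hF_int π),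
      integral_const_mul]
  calc ∑ π, p π * ∫ ω, (F ω (astar ω) - F ω π - γ * (F ω π - fbar π) ^ 2) ∂μ
      = (∑ π, p π) * ∫ ω, F ω (astar ω) ∂μ - ∑ π, (p π * ∫ ω, F ω π ∂μ + γ * p π * V π) := by
        rw [Finset.sum_mul, ← Finset.sum_sub_distrib]
        exact Finset.sum_congr rfl fun π _ => by rw [hinner]; ring
    _ = ∑ π, (∫ ω in astar ⁻¹' {π}, F ω π ∂μ - p π * ∫ ω, F ω π ∂μ - γ * p π * V π) := by
        rw [hp_sum, one_mul, integral_eval_eq_sum_setIntegral_fiber ha_meas hF_int,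
          ← Finset.sum_sub_distrib]
        exact Finset.sum_congr rfl fun π _ => by ring
    _ ≤ ∑ _π : Fin A, 1 / (4 * γ) := Finset.sum_le_sum fun π _ => by
        have := setIntegral_sub_measureReal_mul_integral_le (g := fun ω => F ω π - fbar π)
          (hS π) ((hF_int π).sub (integrable_const (fbar π))) (hV_int π) hγ
        rw [setIntegral_sub_measureReal_mul_integral_sub_const (hF_int π)] at this
        linarith
    _ ≤ A / γ := by
        rw [Finset.sum_const, Finset.card_univ, Fintype.card_fin, nsmul_eq_mul, mul_one_div]
        exact div_le_div_of_nonneg_left A.cast_nonneg hγ (by linarith)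

/-- Bayesian upper bound on the squared-error Decision-Estimation
Coefficient for the multi-armed bandit via posterior sampling. `F ω` is the
random mean-reward vector of a model `ω` drawn from the prior `μ`, `astar ω`
is its optimal arm, and `fbar` is the mean-reward function of an arbitrary
reference model. -/
theorem posterior_sampling_dec_bound (A : ℕ) (hA : 1 ≤ A) (γ : ℝ) (hγ : 0 < γ)
    {Ω : Type*} [MeasurableSpace Ω] (μ : Measure Ω) [IsProbabilityMeasure μ]
    (F : Ω → Fin A → ℝ) (hF : Measurable F)
    (hF_int : ∀ π : Fin A, Integrable (fun ω => F ω π) μ)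
    (hF_sq_int : ∀ π : Fin A, Integrable (fun ω => (F ω π) ^ 2) μ)
    (astar : Ω → Fin A) (ha_meas : Measurable astar)
    (ha_opt : ∀ ω π, F ω π ≤ F ω (astar ω))
    (fbar : Fin A → ℝ) :
    (∑ π : Fin A, (μ {ω | astar ω = π}).toReal *
        ∫ ω, (F ω (astar ω) - F ω π - γ * (F ω π - fbar π) ^ 2) ∂μ) ≤ (A : ℝ) / γ :=
  posterior_sampling_dec_bound_general A γ hγ μ F hF_int hF_sq_int astar ha_meas fbar
end

section
/- Fix an integer A ≥ 2 and γ ≥ A/3, and set Δ := A/(12γ). Let 𝔐 be the class of all bandit models over Π = Fin A whose reward distributions M(π) are probability measures on [0,1], let M̄ be the model with M̄(π) = Ber(1/2) for every π, and for M ∈ 𝔐 write g_M(π) := max_{π'} f^M(π') − f^M(π). Let 𝔐' := { M ∈ 𝔐 : |g_M(π) − g_{M̄}(π)| ≤ Δ for all π } be the localized class around M̄. Then for every probability distribution p on Fin A: sup_{M ∈ 𝔐'} ∑_{π} p(π)·[ g_M(π) − γ·D_H²(M(π), M̄(π)) ] ≥ 2^{−6}·A/γ. In fact the models M_i(π) :=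 Ber(1/2 + Δ·1{π = i}), i ∈ Fin A, all belong to 𝔐', and already max_{i} ∑_{π} p(π)·[ g_{M_i}(π) − γ·D_H²(M_i(π), M̄(π)) ] ≥ A/(48γ). -/
open MeasureTheory

/-- Squared Hellinger distance `D_H²(P,Q) = ∫ (√(dP/dν) − √(dQ/dν))² dν`
computed with the dominating measure `ν = P + Q`. -/
noncomputable def sqHellinger {α : Type*} [MeasurableSpace α] (P Q : Measure α) : ℝ :=
  ∫ x, (Real.sqrt ((P.rnDeriv (P + Q)) x).toReal
      - Real.sqrt ((Q.rnDeriv (P + Q)) x).toReal) ^ 2 ∂(P + Q)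

/-- Bernoulli distribution on `{0,1} ⊆ ℝ` with mean `q`. -/
noncomputable def bern (q : ℝ) : Measure ℝ :=
  ENNReal.ofReal q • Measure.dirac 1 + ENNReal.ofReal (1 - q) • Measure.dirac 0

/-- Mean reward `f^M(π)` of a bandit model `M` at decision `π`. -/
noncomputable def meanReward {A : ℕ} (M : Fin A → Measure ℝ) (π : Fin A) : ℝ :=
  ∫ x, x ∂(M π)

/-- Regret `g_M(π) = max_{π'} f^M(π') − f^M(π)` of decision `π` under `M`. -/
noncomputable def regretFn {A : ℕ} (M : Fin A → Measure ℝ) (π : Fin A) : ℝ :=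
  (⨆ π' : Fin A, meanReward M π') - meanReward M π

/-- A bandit model whose reward distributions are probability measures on `[0,1]`. -/
def IsBanditModel {A : ℕ} (M : Fin A → Measure ℝ) : Prop :=
  ∀ π, IsProbabilityMeasure (M π) ∧ M π (Set.Icc (0 : ℝ) 1) = 1

lemma integrable_dirac'' {H : ℝ → ℝ} (hH : Measurable H) (a : ℝ) :
    Integrable H (Measure.dirac a) :=
  ⟨hH.aestronglyMeasurable, by simp [HasFiniteIntegral, lintegral_dirac]⟩

lemma integrable_bern {H : ℝ → ℝ} (hH : Measurable H) (q : ℝ) :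
    Integrable H (bern q) :=
  ((integrable_dirac'' hH 1).smul_measure ENNReal.ofReal_ne_top).add_measure
    ((integrable_dirac'' hH 0).smul_measure ENNReal.ofReal_ne_top)

lemma integral_bern (q : ℝ) (hq0 : 0 ≤ q) (hq1 : q ≤ 1) {H : ℝ → ℝ} (hH : Measurable H) :
    ∫ x, H x ∂(bern q) = q * H 1 + (1 - q) * H 0 := by
  rw [bern, integral_add_measure ((integrable_dirac'' hH 1).smul_measure ENNReal.ofReal_ne_top)
      ((integrable_dirac'' hH 0).smul_measure ENNReal.ofReal_ne_top),
    integral_smul_measure, integral_smul_measure, integral_dirac, integral_dirac,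
    ENNReal.toReal_ofReal hq0, ENNReal.toReal_ofReal (by linarith)]
  simp [smul_eq_mul]

lemma isProb_bern (q : ℝ) (hq0 : 0 ≤ q) (hq1 : q ≤ 1) : IsProbabilityMeasure (bern q) := by
  constructor
  rw [bern]
  simp [Measure.add_apply, ← ENNReal.ofReal_add hq0 (by linarith : (0:ℝ) ≤ 1 - q)]

lemma bern_withDensity (p q r : ℝ) (hp : 0 ≤ p) (hp1 : p ≤ 1) (hq : 0 ≤ q) (hq1 : q ≤ 1)
    (hpq : 0 < p + q) (hs : 0 < 2 - p - q) (hr0 : 0 ≤ r) (hr1 : r ≤ 1) :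
    (bern p + bern q).withDensity
      (fun x => ENNReal.ofReal (if x = 1 then r / (p + q) else (1 - r) / (2 - p - q)))
      = bern r := by
  classical
  ext s hms
  rw [withDensity_apply _ hms]
  simp only [bern, Measure.restrict_add, Measure.restrict_smul, lintegral_add_measure,
    lintegral_smul_measure, setLIntegral_dirac, Measure.add_apply, Measure.smul_apply,
    Measure.dirac_apply' _ hms, smul_eq_mul]
  have rearr : ∀ a b c d x y : ENNReal,
      a * x + b * y + (c * x + d * y) = (a * x + c * x) + (b * y + d * y) := by
    intros; ring
  have e1 : ENNReal.ofReal p * ENNReal.ofReal (r / (p + q))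
      + ENNReal.ofReal q * ENNReal.ofReal (r / (p + q)) = ENNReal.ofReal r := by
    rw [← ENNReal.ofReal_mul hp, ← ENNReal.ofReal_mul hq,
      ← ENNReal.ofReal_add (mul_nonneg hp (div_nonneg hr0 hpq.le))
        (mul_nonneg hq (div_nonneg hr0 hpq.le))]
    congr 1
    field_simp
  have e0 : ENNReal.ofReal (1 - p) * ENNReal.ofReal ((1 - r) / (2 - p - q))
      + ENNReal.ofReal (1 - q) * ENNReal.ofReal ((1 - r) / (2 - p - q))
      = ENNReal.ofReal (1 - r) := by
    rw [← ENNReal.ofReal_mul (by linarith : (0:ℝ) ≤ 1 - p),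
      ← ENNReal.ofReal_mul (by linarith : (0:ℝ) ≤ 1 - q),
      ← ENNReal.ofReal_add (mul_nonneg (by linarith) (div_nonneg (by linarith) hs.le))
        (mul_nonneg (by linarith) (div_nonneg (by linarith) hs.le))]
    congr 1
    field_simp
    ring
  by_cases h1 : (1:ℝ) ∈ s <;> by_cases h0 : (0:ℝ) ∈ s
  · simp only [h1, h0, if_true, ite_true, if_neg (show ¬(0:ℝ)=1 by norm_num),
      Set.indicator_of_mem h1, Set.indicator_of_mem h0, Pi.one_apply, mul_one]
    rw [rearr, e1, e0]
  · simp only [h1, h0, if_true, if_false, ite_true, ite_false,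
      if_neg (show ¬(0:ℝ)=1 by norm_num), Set.indicator_of_mem h1,
      Set.indicator_of_notMem h0, Pi.one_apply, mul_one, mul_zero, add_zero]
    exact e1
  · simp only [h1, h0, if_true, if_false, ite_true, ite_false,
      if_neg (show ¬(0:ℝ)=1 by norm_num), Set.indicator_of_notMem h1,
      Set.indicator_of_mem h0, Pi.one_apply, mul_one, mul_zero, zero_add, add_zero]
    exact e0
  · simp [h1, h0]

lemma measurable_ite_one {a b : ℝ} :
    Measurable (fun x : ℝ => if x = 1 then a else b) :=
  Measurable.ite measurableSet_eq measurable_const measurable_const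

lemma rnDeriv_bern_ae (p q r : ℝ) (hp : 0 ≤ p) (hp1 : p ≤ 1) (hq : 0 ≤ q) (hq1 : q ≤ 1)
    (hpq : 0 < p + q) (hs : 0 < 2 - p - q) (hr0 : 0 ≤ r) (hr1 : r ≤ 1) :
    (bern r).rnDeriv (bern p + bern q) =ᵐ[bern p + bern q]
      fun x => ENNReal.ofReal (if x = 1 then r / (p + q) else (1 - r) / (2 - p - q)) := by
  haveI := isProb_bern p hp hp1
  haveI := isProb_bern q hq hq1
  have hf : Measurable
      (fun x : ℝ => ENNReal.ofReal (if x = 1 then r / (p + q) else (1 - r) / (2 - p - q))) :=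
    measurable_ite_one.ennreal_ofReal
  exact (Measure.eq_rnDeriv (ν := bern p + bern q) hf Measure.MutuallySingular.zero_left
    (by rw [zero_add, bern_withDensity p q r hp hp1 hq hq1 hpq hs hr0 hr1])).symm

lemma sqrt_scale (a b c : ℝ) (ha : 0 ≤ a) (hb : 0 ≤ b) (hc : 0 < c) :
    c * (Real.sqrt (a / c) - Real.sqrt (b / c)) ^ 2
      = (Real.sqrt a - Real.sqrt b) ^ 2 := by
  rw [Real.sqrt_div ha, Real.sqrt_div hb, div_sub_div_same, div_pow,
    Real.sq_sqrt hc.le, mul_div_cancel₀ _ (ne_of_gt hc)]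

lemma sqHellinger_bern (p q : ℝ) (hp : 0 ≤ p) (hp1 : p ≤ 1) (hq : 0 ≤ q) (hq1 : q ≤ 1)
    (hpq : 0 < p + q) (hs : 0 < 2 - p - q) :
    sqHellinger (bern p) (bern q)
      = (Real.sqrt p - Real.sqrt q) ^ 2
        + (Real.sqrt (1 - p) - Real.sqrt (1 - q)) ^ 2 := by
  have hP := rnDeriv_bern_ae p q p hp hp1 hq hq1 hpq hs hp hp1
  have hQ := rnDeriv_bern_ae p q q hp hp1 hq hq1 hpq hs hq hq1
  set G : ℝ → ℝ := fun x =>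
    (Real.sqrt (if x = 1 then p / (p + q) else (1 - p) / (2 - p - q))
      - Real.sqrt (if x = 1 then q / (p + q) else (1 - q) / (2 - p - q))) ^ 2 with hG
  have hGmeas : Measurable G := by
    apply Measurable.pow_const
    exact ((Real.continuous_sqrt.measurable.comp measurable_ite_one).sub
      (Real.continuous_sqrt.measurable.comp measurable_ite_one))
  have hcong : sqHellinger (bern p) (bern q) = ∫ x, G x ∂(bern p + bern q) := by
    rw [sqHellinger]
    apply integral_congr_ae
    filter_upwards [hP, hQ] with x h1 h2
    rw [h1, h2, hG]
    simp only [ENNReal.toReal_ofReal_eq_iff]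
    by_cases hx : x = 1 <;>
      simp [hx, ENNReal.toReal_ofReal, div_nonneg, hp, hq, hpq.le, hs.le,
        div_nonneg (by linarith : (0:ℝ) ≤ 1 - p) hs.le,
        div_nonneg (by linarith : (0:ℝ) ≤ 1 - q) hs.le]
  rw [hcong, integral_add_measure (integrable_bern hGmeas p) (integrable_bern hGmeas q),
    integral_bern p hp hp1 hGmeas, integral_bern q hq hq1 hGmeas]
  have hG1 : G 1 = (Real.sqrt (p / (p + q)) - Real.sqrt (q / (p + q))) ^ 2 := by simp [hG]
  have hG0 : G 0 = (Real.sqrt ((1 - p) / (2 - p - q))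
      - Real.sqrt ((1 - q) / (2 - p - q))) ^ 2 := by norm_num [hG]
  rw [hG1, hG0]
  have k1 := sqrt_scale p q (p + q) hp hq hpq
  have k0 := sqrt_scale (1 - p) (1 - q) (2 - p - q) (by linarith) (by linarith) hs
  nlinarith [k1, k0]

lemma sqHellinger_self {α : Type*} [MeasurableSpace α] (P : Measure α) :
    sqHellinger P P = 0 := by
  simp [sqHellinger]

lemma sqHellinger_nonneg {α : Type*} [MeasurableSpace α] (P Q : Measure α) :
    0 ≤ sqHellinger P Q :=
  integral_nonneg fun x => sq_nonneg _

lemma hell_bound (Δ : ℝ) (h0 : 0 < Δ) (h1 : Δ ≤ 1/4) :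
    sqHellinger (bern (1/2 + Δ)) (bern (1/2)) ≤ 2 * Δ ^ 2 := by
  rw [sqHellinger_bern (1/2 + Δ) (1/2) (by linarith) (by linarith) (by norm_num)
    (by norm_num) (by linarith) (by linarith)]
  have e1 : (1:ℝ) - (1/2 + Δ) = 1/2 - Δ := by ring
  have e2 : (1:ℝ) - 1/2 = 1/2 := by norm_num
  rw [e1, e2]
  set a := Real.sqrt (1/2 + Δ)
  set b := Real.sqrt (1/2 - Δ)
  set c := Real.sqrt (1/2 : ℝ)
  have ha2 : a ^ 2 = 1/2 + Δ := Real.sq_sqrt (by linarith)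
  have hb2 : b ^ 2 = 1/2 - Δ := Real.sq_sqrt (by linarith)
  have hc2 : c ^ 2 = 1/2 := Real.sq_sqrt (by norm_num)
  have ha : 0 ≤ a := Real.sqrt_nonneg _
  have hb : 0 ≤ b := Real.sqrt_nonneg _
  have hc : 0 ≤ c := Real.sqrt_nonneg _
  have habl : 1/2 - 2*Δ^2 + Δ^4 ≤ a * b := by
    have hab : a * b = Real.sqrt ((1/2 + Δ) * (1/2 - Δ)) :=
      (Real.sqrt_mul (by linarith) _).symm
    rw [hab]
    refine (Real.le_sqrt (by nlinarith) (by nlinarith)).mpr ?_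
    have hd2 : Δ^2 ≤ 1/16 := by nlinarith
    have h4 : Δ^4 ≤ Δ^2/16 := by nlinarith [sq_nonneg Δ]
    have h68 : Δ^8 ≤ 4*Δ^6 := by nlinarith [sq_nonneg (Δ^3), pow_nonneg h0.le 6]
    nlinarith [h4, h68, pow_nonneg h0.le 6]
  have hsq : (c * (a + b)) ^ 2 = 1/2 + a * b := by
    rw [mul_pow, hc2]; nlinarith [ha2, hb2]
  have hkey : 1 - Δ^2 ≤ c * (a + b) := by
    nlinarith [hsq, habl, mul_nonneg hc (add_nonneg ha hb), sq_nonneg Δ]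
  nlinarith [hkey]

lemma bern_Icc (q : ℝ) (hq0 : 0 ≤ q) (hq1 : q ≤ 1) : bern q (Set.Icc (0:ℝ) 1) = 1 := by
  rw [bern]
  simp [Measure.add_apply, Measure.dirac_apply' _ measurableSet_Icc,
    Set.indicator_of_mem (by simp : (1:ℝ) ∈ Set.Icc (0:ℝ) 1),
    Set.indicator_of_mem (by norm_num : (0:ℝ) ∈ Set.Icc (0:ℝ) 1),
    ← ENNReal.ofReal_add hq0 (by linarith : (0:ℝ) ≤ 1 - q)]

lemma regret_const {A : ℕ} (hA : 0 < A) (π : Fin A) :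
    regretFn (fun _ : Fin A => bern (1/2)) π = 0 := by
  haveI : Nonempty (Fin A) := ⟨⟨0, hA⟩⟩
  have hm : ∀ π' : Fin A, meanReward (fun _ : Fin A => bern (1/2)) π' = 1/2 := by
    intro π'
    rw [meanReward, integral_bern (H := fun x => x) (1/2) (by norm_num) (by norm_num) measurable_id]
    norm_num
  rw [regretFn]
  simp only [hm]
  rw [ciSup_const]
  ring

lemma mean_Mi {A : ℕ} (Δ : ℝ) (h0 : 0 ≤ Δ) (h1 : Δ ≤ 1/4) (i π : Fin A) :
    meanReward (fun π' => bern (1/2 + if π' = i then Δ else 0)) π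
      = 1/2 + if π = i then Δ else 0 := by
  rw [meanReward, integral_bern (H := fun x => x) _ (by split_ifs <;> linarith)
    (by split_ifs <;> linarith) measurable_id]
  norm_num

lemma regret_Mi {A : ℕ} (hA : 0 < A) (Δ : ℝ) (h0 : 0 < Δ) (h1 : Δ ≤ 1/4) (i π : Fin A) :
    regretFn (fun π' => bern (1/2 + if π' = i then Δ else 0)) π
      = if π = i then 0 else Δ := by
  haveI : Nonempty (Fin A) := ⟨⟨0, hA⟩⟩
  rw [regretFn]
  have hsup : (⨆ π' : Fin A,
      meanReward (fun π'' => bern (1/2 + if π'' = i then Δ else 0)) π') = 1/2 + Δ := by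
    apply le_antisymm
    · apply ciSup_le
      intro π'
      rw [mean_Mi Δ h0.le h1]
      split_ifs <;> linarith
    · have := le_ciSup (f := fun π' : Fin A =>
        meanReward (fun π'' => bern (1/2 + if π'' = i then Δ else 0)) π')
        (Set.Finite.bddAbove (Set.finite_range _)) i
      rwa [mean_Mi Δ h0.le h1, if_pos rfl] at this
  rw [hsup, mean_Mi Δ h0.le h1]
  split_ifs <;> ring

/-- lower bound on the localized Decision-Estimation Coefficient for
the multi-armed bandit, with reference model `M̄(π) = Ber(1/2)` and hard models
`M_i(π) = Ber(1/2 + Δ·1{π = i})`. -/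
theorem mab_localized_dec_lower_bound (A : ℕ) (hA : 2 ≤ A) (γ Δ : ℝ)
    (hγ : (A : ℝ) / 3 ≤ γ) (hΔ : Δ = (A : ℝ) / (12 * γ)) :
    (∀ i : Fin A,
        IsBanditModel (fun π => bern (1 / 2 + if π = i then Δ else 0)) ∧
        ∀ π : Fin A,
          |regretFn (fun π' => bern (1 / 2 + if π' = i then Δ else 0)) π -
              regretFn (fun _ : Fin A => bern (1 / 2)) π| ≤ Δ) ∧
      ∀ p : Fin A → ℝ, (∀ π, 0 ≤ p π) → (∑ π, p π) = 1 →
        (∃ i : Fin A, (A : ℝ) / (48 * γ) ≤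
            ∑ π : Fin A, p π *
              (regretFn (fun π' => bern (1 / 2 + if π' = i then Δ else 0)) π -
                γ * sqHellinger (bern (1 / 2 + if π = i then Δ else 0)) (bern (1 / 2)))) ∧
        (∃ M : Fin A → Measure ℝ,
            IsBanditModel M ∧
            (∀ π : Fin A, |regretFn M π - regretFn (fun _ : Fin A => bern (1 / 2)) π| ≤ Δ) ∧
            (2 : ℝ) ^ (-(6 : ℤ)) * (A : ℝ) / γ ≤
              ∑ π : Fin A, p π * (regretFn M π - γ * sqHellinger (M π) (bern (1 / 2)))) := by
  have hA0 : 0 < A := by omega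
  haveI : Nonempty (Fin A) := ⟨⟨0, hA0⟩⟩
  have hAR : (2:ℝ) ≤ (A:ℝ) := by exact_mod_cast hA
  have hγ0 : 0 < γ := lt_of_lt_of_le (by linarith) hγ
  have hΔ0 : 0 < Δ := by rw [hΔ]; positivity
  have hΔ4 : Δ ≤ 1/4 := by
    rw [hΔ, div_le_iff₀ (by positivity)]
    linarith
  have hγΔ : γ * Δ = (A:ℝ)/12 := by
    rw [hΔ]
    field_simp
  -- part 1
  have part1 : ∀ i : Fin A,
      IsBanditModel (fun π => bern (1 / 2 + if π = i then Δ else 0)) ∧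
      ∀ π : Fin A,
        |regretFn (fun π' => bern (1 / 2 + if π' = i then Δ else 0)) π -
            regretFn (fun _ : Fin A => bern (1 / 2)) π| ≤ Δ := by
    intro i
    constructor
    · intro π
      exact ⟨isProb_bern _ (by split_ifs <;> linarith) (by split_ifs <;> linarith),
        bern_Icc _ (by split_ifs <;> linarith) (by split_ifs <;> linarith)⟩
    · intro π
      rw [regret_Mi hA0 Δ hΔ0 hΔ4 i π, regret_const hA0 π, sub_zero]
      split_ifs
      · simpa using hΔ0.le
      · rw [abs_of_nonneg hΔ0.le]
  refine ⟨part1, ?_⟩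
  intro p hp hsum
  obtain ⟨i, -, hi⟩ := Finset.exists_min_image Finset.univ p ⟨Classical.arbitrary _,
    Finset.mem_univ _⟩
  have hpiA : (A:ℝ) * p i ≤ 1 := by
    have : ∑ _π : Fin A, p i ≤ ∑ π, p π :=
      Finset.sum_le_sum fun π _ => hi π (Finset.mem_univ π)
    rw [Finset.sum_const, Finset.card_univ, Fintype.card_fin, hsum, nsmul_eq_mul] at this
    exact this
  set D := sqHellinger (bern (1/2 + Δ)) (bern (1/2)) with hDdef
  have hD0 : 0 ≤ D := sqHellinger_nonneg _ _
  have hD : D ≤ 2 * Δ^2 := hell_bound Δ hΔ0 hΔ4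
  have hsummand : ∀ π : Fin A,
      p π * (regretFn (fun π' => bern (1 / 2 + if π' = i then Δ else 0)) π -
        γ * sqHellinger (bern (1 / 2 + if π = i then Δ else 0)) (bern (1 / 2)))
      = p π * Δ - (if π = i then p π * (Δ + γ * D) else 0) := by
    intro π
    rw [regret_Mi hA0 Δ hΔ0 hΔ4 i π]
    by_cases h : π = i
    · rw [if_pos h, if_pos h, if_pos h]
      ring
    · rw [if_neg h, if_neg h, if_neg h, add_zero, sqHellinger_self]
      ring
  have hsumval : ∑ π : Fin A, p π *
      (regretFn (fun π' => bern (1 / 2 + if π' = i then Δ else 0)) π -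
        γ * sqHellinger (bern (1 / 2 + if π = i then Δ else 0)) (bern (1 / 2)))
      = Δ - p i * (Δ + γ * D) := by
    rw [Finset.sum_congr rfl fun π _ => hsummand π, Finset.sum_sub_distrib,
      Finset.sum_ite_eq' Finset.univ i, if_pos (Finset.mem_univ i), ← Finset.sum_mul, hsum,
      one_mul]
  have hXnn : 0 ≤ Δ + γ * D := by positivity
  have hX : Δ + γ * D ≤ Δ + ((A:ℝ)/6) * Δ := by nlinarith [hγΔ, hD, hγ0, hΔ0]
  have hp2 : p i ≤ 1/2 := by nlinarith [hp i]
  have hmain : Δ/4 ≤ Δ - p i * (Δ + γ * D) := by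
    nlinarith [mul_le_mul_of_nonneg_left hX (hp i),
      mul_le_mul_of_nonneg_right hp2 hΔ0.le,
      mul_le_mul_of_nonneg_right hpiA hΔ0.le, hp i, hΔ0]
  have hquarter : (A:ℝ)/(48*γ) = Δ/4 := by
    rw [hΔ]
    field_simp
    ring
  have hbound1 : (A:ℝ)/(48*γ) ≤ ∑ π : Fin A, p π *
      (regretFn (fun π' => bern (1 / 2 + if π' = i then Δ else 0)) π -
        γ * sqHellinger (bern (1 / 2 + if π = i then Δ else 0)) (bern (1 / 2))) := by
    rw [hsumval, hquarter]
    exact hmain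
  refine ⟨⟨i, hbound1⟩, ⟨fun π' => bern (1 / 2 + if π' = i then Δ else 0),
    (part1 i).1, (part1 i).2, ?_⟩⟩
  have h64 : (2:ℝ) ^ (-(6:ℤ)) * (A:ℝ) / γ ≤ (A:ℝ)/(48*γ) := by
    rw [show ((2:ℝ) ^ (-(6:ℤ))) = 1/64 by norm_num, div_le_div_iff₀ hγ0 (by positivity)]
    nlinarith [mul_nonneg (by linarith : (0:ℝ) ≤ (A:ℝ)) hγ0.le]
  exact le_trans h64 hbound1
end

section
/- Let (Π, ρ) be a nonempty metric space and d > 0, and suppose that for every ε ∈ (0,1] there is a finite subset Π' ⊆ Π with |Π'| ≤ ε^{−d} such that every π ∈ Π satisfies min_{π' ∈ Π'} ρ(π, π') ≤ ε. Then for every γ ≥ 1 and every 1-Lipschitz function f̄ : Π → [0,1], there exists a finitely supported probability distribution p on Π such that for every 1-Lipschitz function f : Π → [0,1]: ∑_{π} p(π) · [ sup_{π' ∈ Π} f(π') − f(π) − γ·(f(π) − f̄(π))² ] ≤ 2·γ^{−1/(d+1)}. -/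
open Finset

private lemma igw_gap_bound (a lam γ : ℝ) (ha : 0 ≤ a) (hlam : 1 ≤ lam) (hγ : 0 < γ) :
    (lam + 2 * γ * a)⁻¹ * a ≤ 1 / (2 * γ) := by
  have hD : 0 < lam + 2 * γ * a := by nlinarith
  have h : (lam + 2 * γ * a)⁻¹ * a = a / (lam + 2 * γ * a) := by ring
  rw [h, div_le_div_iff₀ hD (by positivity)]
  nlinarith

private lemma igw_est_bound (γ x : ℝ) (hγ : 0 < γ) : -x - γ / 2 * x ^ 2 ≤ 1 / (2 * γ) := by
  have h : 1 / (2 * γ) - (-x - γ / 2 * x ^ 2) = (γ * x + 1) ^ 2 / (2 * γ) := by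
    field_simp; ring
  linarith [div_nonneg (sq_nonneg (γ * x + 1)) (by positivity : (0:ℝ) ≤ 2 * γ), h]

private lemma igw_opt_bound (γ lam Δ δ : ℝ) (hγ : 0 < γ) (hlam : 1 ≤ lam) (hΔ : 0 ≤ Δ) :
    (δ - Δ) - γ / 2 * ((lam + 2 * γ * Δ)⁻¹ * δ ^ 2) ≤ lam / (2 * γ) := by
  have hD : 0 < lam + 2 * γ * Δ := by nlinarith
  have h : lam / (2 * γ) - ((δ - Δ) - γ / 2 * ((lam + 2 * γ * Δ)⁻¹ * δ ^ 2))
      = (γ * δ - (lam + 2 * γ * Δ)) ^ 2 / (2 * γ * (lam + 2 * γ * Δ)) := by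
    field_simp; ring
  linarith [div_nonneg (sq_nonneg (γ * δ - (lam + 2 * γ * Δ)))
    (by positivity : (0:ℝ) ≤ 2 * γ * (lam + 2 * γ * Δ)), h]

/-- upper bound on the squared-error Decision-Estimation Coefficient
for Lipschitz bandits in a metric space with covering number `N(X,ε) ≤ ε^{−d}`:
there is a finitely supported exploration distribution `p` certifying the value
`2·γ^{−1/(d+1)}` against every 1-Lipschitz alternative mean-reward function `f`. -/
theorem lipschitz_bandit_dec_upper_bound {X : Type*} [MetricSpace X] [Nonempty X]
    (d : ℝ) (hd : 0 < d)
    (hcover : ∀ ε : ℝ, ε ∈ Set.Ioc (0 : ℝ) 1 → ∃ s : Finset X,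
      (s.card : ℝ) ≤ ε ^ (-d) ∧ ∀ π : X, ∃ π' ∈ s, dist π π' ≤ ε)
    (γ : ℝ) (hγ : 1 ≤ γ) (fbar : X → ℝ) (hfbar_lip : LipschitzWith 1 fbar)
    (hfbar_mem : ∀ π, fbar π ∈ Set.Icc (0 : ℝ) 1) :
    ∃ (s : Finset X) (p : X → ℝ), (∀ π, 0 ≤ p π) ∧ (∀ π ∉ s, p π = 0) ∧
      (∑ π ∈ s, p π) = 1 ∧
      ∀ f : X → ℝ, LipschitzWith 1 f → (∀ π, f π ∈ Set.Icc (0 : ℝ) 1) →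
        (∑ π ∈ s, p π * ((⨆ π', f π') - f π - γ * (f π - fbar π) ^ 2)) ≤
          2 * γ ^ (-1 / (d + 1)) := by
  classical
  have hγpos : (0:ℝ) < γ := lt_of_lt_of_le one_pos hγ
  have hd1 : (0:ℝ) < d + 1 := by linarith
  set ε : ℝ := γ ^ (-1 / (d + 1)) with hε_def
  have hεpos : 0 < ε := Real.rpow_pos_of_pos hγpos _
  have hεle1 : ε ≤ 1 := by
    apply Real.rpow_le_one_of_one_le_of_nonpos hγ
    rw [div_nonpos_iff]; right; constructor <;> linarith
  -- the key power identity : ε ^ (-d) = ε * γ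
  have hpow : ε ^ (-d) = ε * γ := by
    rw [hε_def, ← Real.rpow_mul hγpos.le]
    have he : (-1 / (d + 1)) * (-d) = (-1 / (d + 1)) + 1 := by
      field_simp; ring
    rw [he, Real.rpow_add hγpos, Real.rpow_one]
  obtain ⟨s, hcard, hcov⟩ := hcover ε ⟨hεpos, hεle1⟩
  have hsne : s.Nonempty := by
    obtain ⟨π', hπ', _⟩ := hcov (Classical.arbitrary X); exact ⟨π', hπ'⟩
  set K : ℝ := (s.card : ℝ) with hK_def
  have hK1 : (1:ℝ) ≤ K := by
    have h : 1 ≤ s.card := Finset.card_pos.mpr hsne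
    rw [hK_def]; exact_mod_cast h
  have hKεγ : K ≤ ε * γ := hcard.trans_eq hpow
  obtain ⟨πhat, hπhat, hmax⟩ := s.exists_max_image fbar hsne
  set Δb : X → ℝ := fun π => fbar πhat - fbar π with hΔb_def
  have hΔb : ∀ π ∈ s, 0 ≤ Δb π := fun π h => sub_nonneg.2 (hmax π h)
  -- find the normalizing constant lam by the intermediate value theorem
  set g : ℝ → ℝ := fun l => ∑ π ∈ s, (l + 2 * γ * Δb π)⁻¹ with hg_def
  have hgc : ContinuousOn g (Set.Icc 1 K) := by
    apply continuousOn_finset_sum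
    intro π hπ
    apply ContinuousOn.inv₀
    · exact (continuous_id.add continuous_const).continuousOn
    · intro x hx
      have h1 : (1:ℝ) ≤ x := hx.1
      have h2 : 0 ≤ 2 * γ * Δb π := mul_nonneg (by positivity) (hΔb π hπ)
      exact ne_of_gt (by nlinarith)
  have hg1 : 1 ≤ g 1 := by
    have hterm : (1 + 2 * γ * Δb πhat)⁻¹ = 1 := by
      simp [hΔb_def]
    simp only [hg_def]
    calc (1:ℝ) = (1 + 2 * γ * Δb πhat)⁻¹ := hterm.symm
      _ ≤ ∑ π ∈ s, ((1:ℝ) + 2 * γ * Δb π)⁻¹ := Finset.single_le_sum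
          (f := fun π => ((1:ℝ) + 2 * γ * Δb π)⁻¹) (fun π hπ =>
          inv_nonneg.mpr (by nlinarith [hΔb π hπ])) hπhat
  have hgK : g K ≤ 1 := by
    have : g K ≤ s.card • K⁻¹ := by
      apply Finset.sum_le_card_nsmul
      intro π hπ
      apply inv_anti₀ (by linarith)
      nlinarith [hΔb π hπ]
    have h2 : (s.card : ℝ) • K⁻¹ = 1 := by
      rw [smul_eq_mul, mul_inv_cancel₀ (by linarith : K ≠ 0)]
    rw [← h2]
    simpa using this
  obtain ⟨lam, hlam_mem, hglam⟩ : ∃ lam ∈ Set.Icc (1:ℝ) K, g lam = 1 := by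
    have := intermediate_value_Icc' hK1 hgc (Set.mem_Icc.mpr ⟨hgK, hg1⟩)
    obtain ⟨lam, hmem, heq⟩ := this
    exact ⟨lam, hmem, heq⟩
  have hlam1 : (1:ℝ) ≤ lam := hlam_mem.1
  have hlamK : lam ≤ K := hlam_mem.2
  set q : X → ℝ := fun π => (lam + 2 * γ * Δb π)⁻¹ with hq_def
  have hDpos : ∀ π ∈ s, 0 < lam + 2 * γ * Δb π := by
    intro π hπ; nlinarith [hΔb π hπ]
  have hqnn : ∀ π ∈ s, 0 ≤ q π := fun π hπ => le_of_lt (inv_pos.mpr (hDpos π hπ))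
  refine ⟨s, fun π => if π ∈ s then q π else 0, ?_, ?_, ?_, ?_⟩
  · intro π
    by_cases hπ : π ∈ s
    · simpa [hπ] using hqnn π hπ
    · simp [hπ]
  · intro π hπ; simp [hπ]
  · rw [Finset.sum_congr rfl (fun π hπ => if_pos hπ)]
    exact hglam
  · intro f hf_lip hf_mem
    have hqsum : ∑ π ∈ s, q π = 1 := hglam
    -- the supremum is within ε of the max over the cover
    obtain ⟨πst, hπst, hfmax⟩ := s.exists_max_image f hsne
    have hS : (⨆ π', f π') ≤ f πst + ε := by
      apply ciSup_le
      intro π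
      obtain ⟨π', hπ's, hdist⟩ := hcov π
      have hl : f π - f π' ≤ dist π π' := by
        have h := hf_lip.dist_le_mul π π'
        rw [Real.dist_eq] at h
        simp only [NNReal.coe_one, one_mul] at h
        exact (le_abs_self _).trans h
      have := hfmax π' hπ's
      linarith
    have hrw : (∑ π ∈ s, (if π ∈ s then q π else 0) *
          ((⨆ π', f π') - f π - γ * (f π - fbar π) ^ 2))
        = ∑ π ∈ s, q π * ((⨆ π', f π') - f π - γ * (f π - fbar π) ^ 2) :=
      Finset.sum_congr rfl (fun π hπ => by rw [if_pos hπ])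
    rw [hrw]
    set δ : X → ℝ := fun π => f π - fbar π with hδ_def
    have step1 : (∑ π ∈ s, q π * ((⨆ π', f π') - f π - γ * (f π - fbar π) ^ 2))
        ≤ ∑ π ∈ s, q π * ((f πst + ε) - f π - γ * (f π - fbar π) ^ 2) := by
      apply Finset.sum_le_sum
      intro π hπ
      apply mul_le_mul_of_nonneg_left _ (hqnn π hπ)
      have := hS
      linarith
    -- split the sum
    have hsplit : (∑ π ∈ s, q π * ((f πst + ε) - f π - γ * (f π - fbar π) ^ 2))
        = (∑ π ∈ s, q π * ε)
          + (∑ π ∈ s, q π * Δb π)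
          + (∑ π ∈ s, q π * (-(δ π) - γ / 2 * (δ π) ^ 2))
          + ((f πst - fbar πhat) * (∑ π ∈ s, q π)
              - γ / 2 * ∑ π ∈ s, q π * (δ π) ^ 2) := by
      rw [Finset.mul_sum, Finset.mul_sum, ← Finset.sum_sub_distrib,
        ← Finset.sum_add_distrib, ← Finset.sum_add_distrib, ← Finset.sum_add_distrib]
      apply Finset.sum_congr rfl
      intro π hπ
      simp only [hΔb_def, hδ_def]
      ring
    have b0 : (∑ π ∈ s, q π * ε) = ε := by
      rw [← Finset.sum_mul, hqsum, one_mul]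
    have b1 : (∑ π ∈ s, q π * Δb π) ≤ (K - 1) * (1 / (2 * γ)) := by
      have hzero : q πhat * Δb πhat = 0 := by simp [hΔb_def]
      have herase : (∑ π ∈ s, q π * Δb π) = ∑ π ∈ s.erase πhat, q π * Δb π := by
        rw [← Finset.sum_erase_add s _ hπhat, hzero, add_zero]
      rw [herase]
      have hbd : ∀ π ∈ s.erase πhat, q π * Δb π ≤ 1 / (2 * γ) := by
        intro π hπ
        have hπs : π ∈ s := Finset.mem_of_mem_erase hπ
        exact igw_gap_bound (Δb π) lam γ (hΔb π hπs) hlam1 hγpos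
      calc (∑ π ∈ s.erase πhat, q π * Δb π)
          ≤ (s.erase πhat).card • (1 / (2 * γ)) := Finset.sum_le_card_nsmul _ _ _ hbd
        _ = ((s.erase πhat).card : ℝ) * (1 / (2 * γ)) := by rw [nsmul_eq_mul]
        _ = (K - 1) * (1 / (2 * γ)) := by
            rw [Finset.card_erase_of_mem hπhat]
            congr 1
            rw [hK_def, Nat.cast_sub (Finset.card_pos.mpr hsne), Nat.cast_one]
      -- done
    have b2 : (∑ π ∈ s, q π * (-(δ π) - γ / 2 * (δ π) ^ 2)) ≤ 1 / (2 * γ) := by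
      calc (∑ π ∈ s, q π * (-(δ π) - γ / 2 * (δ π) ^ 2))
          ≤ ∑ π ∈ s, q π * (1 / (2 * γ)) := by
            apply Finset.sum_le_sum
            intro π hπ
            exact mul_le_mul_of_nonneg_left (igw_est_bound γ (δ π) hγpos) (hqnn π hπ)
        _ = 1 / (2 * γ) := by rw [← Finset.sum_mul, hqsum, one_mul]
    have b3 : ((f πst - fbar πhat) * (∑ π ∈ s, q π) - γ / 2 * ∑ π ∈ s, q π * (δ π) ^ 2)
        ≤ K / (2 * γ) := by
      rw [hqsum, mul_one]
      have hsingle : q πst * (δ πst) ^ 2 ≤ ∑ π ∈ s, q π * (δ π) ^ 2 := by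
        apply Finset.single_le_sum _ hπst
        intro π hπ
        exact mul_nonneg (hqnn π hπ) (sq_nonneg _)
      have hCeq : f πst - fbar πhat = δ πst - Δb πst := by
        simp only [hδ_def, hΔb_def]; ring
      have hopt := igw_opt_bound γ lam (Δb πst) (δ πst) hγpos hlam1 (hΔb πst hπst)
      have hlamb : lam / (2 * γ) ≤ K / (2 * γ) := by gcongr
      have hmul := mul_le_mul_of_nonneg_left hsingle (by positivity : (0:ℝ) ≤ γ / 2)
      calc (f πst - fbar πhat) - γ / 2 * ∑ π ∈ s, q π * (δ π) ^ 2
          ≤ (f πst - fbar πhat) - γ / 2 * (q πst * (δ πst) ^ 2) := by linarith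
        _ = (δ πst - Δb πst) - γ / 2 * ((lam + 2 * γ * Δb πst)⁻¹ * (δ πst) ^ 2) := by
            rw [hCeq]
        _ ≤ lam / (2 * γ) := hopt
        _ ≤ K / (2 * γ) := hlamb
    calc (∑ π ∈ s, q π * ((⨆ π', f π') - f π - γ * (f π - fbar π) ^ 2))
        ≤ ∑ π ∈ s, q π * ((f πst + ε) - f π - γ * (f π - fbar π) ^ 2) := step1
      _ = (∑ π ∈ s, q π * ε) + (∑ π ∈ s, q π * Δb π)
          + (∑ π ∈ s, q π * (-(δ π) - γ / 2 * (δ π) ^ 2))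
          + ((f πst - fbar πhat) * (∑ π ∈ s, q π)
              - γ / 2 * ∑ π ∈ s, q π * (δ π) ^ 2) := hsplit
      _ ≤ ε + (K - 1) * (1 / (2 * γ)) + 1 / (2 * γ) + K / (2 * γ) := by
          linarith [b0, b1, b2, b3]
      _ ≤ 2 * ε := by
          have hKγ : K / γ ≤ ε := by
            rw [div_le_iff₀ hγpos]; linarith [hKεγ]
          have h1 : (K - 1) * (1 / (2 * γ)) + 1 / (2 * γ) + K / (2 * γ) = K / γ := by
            field_simp; ring
          linarith
      _ = 2 * γ ^ (-1 / (d + 1)) := by rw [hε_def]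
end

section
/- Let Π be a set and σ² ≥ 1/8. Let F be a class of functions f : Π → [0,1], each attaining its supremum at some point π_f ∈ Π, and suppose F is star-shaped around 0: λ·f ∈ F for every f ∈ F and λ ∈ [0,1]. For f ∈ F let M_f denote the Gaussian bandit model M_f(π) := N(f(π), σ²) (the real Gaussian distribution with mean f(π) and variance σ²). For f̄ ∈ F and ε ≥ 0 let F_ε(f̄) := { f ∈ F : f̄(π_{f̄}) ≥ f(π_f) − ε }, and for a subclass G ⊆ F define dec_γ(G, f̄) := inf_p sup_{f ∈ G} E_{π∼p}[ f(π_f) − f(π) − γ·D_H²(M_f(π), M_{f̄}(π)) ], where the infimum is over finitely supported probability distributions p on Π. Then for every ε ∈ [0,1] and every γ ≥ 0: sup_{f̄ ∈ F} dec_γ(F_ε(f̄), f̄) ≥ ε · sup_{f̄ ∈ F} dec_{4eεγ}(F, f̄). -/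
open MeasureTheory ProbabilityTheory
open scoped NNReal ENNReal

/-- A finitely supported probability distribution on `X`. -/
structure FinDist (X : Type*) where
  support : Finset X
  w : X → ℝ
  nonneg : ∀ x, 0 ≤ w x
  zero_of_not_mem : ∀ x ∉ support, w x = 0
  sum_eq_one : ∑ x ∈ support, w x = 1

/-- Expectation `E_{x∼p}[h(x)]` under a finitely supported distribution. -/
noncomputable def FinDist.expect {X : Type*} (p : FinDist X) (h : X → ℝ) : ℝ :=
  ∑ x ∈ p.support, p.w x * h x

/-- The Decision-Estimation Coefficient `dec_γ(G, f̄)` of a class `G` of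
mean-reward functions for Gaussian bandit models `M_f(x) = N(f(x), v)`, relative
to the reference model `M_{f̄}`; `piOf f` selects a maximizer of `f` and the
infimum runs over finitely supported distributions on `X`. -/
noncomputable def decoefGauss {X : Type*} (v : ℝ≥0) (γ : ℝ) (piOf : (X → ℝ) → X)
    (G : Set (X → ℝ)) (fbar : X → ℝ) : ℝ :=
  ⨅ p : FinDist X, ⨆ f : G, p.expect fun x =>
    f.1 (piOf f.1) - f.1 x - γ * sqHellinger (gaussianReal (f.1 x) v) (gaussianReal (fbar x) v)

lemma one_sub_exp_neg_le (s : ℝ) : 1 - Real.exp (-s) ≤ s := by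
  have := Real.add_one_le_exp (-s); linarith

lemma le_exp_one_mul_one_sub_exp_neg {t : ℝ} (ht0 : 0 ≤ t) (ht1 : t ≤ 1) :
    t ≤ Real.exp 1 * (1 - Real.exp (-t)) := by
  have h2 : (t + 1) * Real.exp (-t) ≤ 1 := by
    have h3 := mul_le_mul_of_nonneg_right (Real.add_one_le_exp t) (Real.exp_nonneg (-t))
    rwa [← Real.exp_add, add_neg_cancel, Real.exp_zero] at h3
  have h1 : t * Real.exp (-t) ≤ 1 - Real.exp (-t) := by nlinarith
  have h4 : Real.exp (-1) ≤ Real.exp (-t) := Real.exp_le_exp.2 (by linarith)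
  have h5 : t * Real.exp (-1) ≤ t * Real.exp (-t) := mul_le_mul_of_nonneg_left h4 ht0
  have h6 : Real.exp 1 * Real.exp (-1) = 1 := by rw [← Real.exp_add]; simp
  have h7 := mul_le_mul_of_nonneg_left (h5.trans h1) (Real.exp_nonneg 1)
  nlinarith [h6, h7]

lemma exp_loc_ineq {ε t : ℝ} (hε0 : 0 ≤ ε) (hε1 : ε ≤ 1) (ht0 : 0 ≤ t) (ht1 : t ≤ 1) :
    1 - Real.exp (-(ε^2 * t)) ≤ 4 * Real.exp 1 * ε^2 * (1 - Real.exp (-t)) := by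
  have h1 : 1 - Real.exp (-(ε^2*t)) ≤ ε^2*t := one_sub_exp_neg_le _
  have h2 := le_exp_one_mul_one_sub_exp_neg ht0 ht1
  have h3 : 0 ≤ 1 - Real.exp (-t) := by
    have : Real.exp (-t) ≤ 1 := Real.exp_le_one_iff.2 (by linarith)
    linarith
  have h4 := mul_le_mul_of_nonneg_left h2 (sq_nonneg ε)
  nlinarith [Real.exp_pos 1, sq_nonneg ε, mul_nonneg (mul_nonneg (by positivity : (0:ℝ) ≤ 3 * Real.exp 1) (sq_nonneg ε)) h3]

lemma sqHellinger_gaussianReal (a b : ℝ) {v : ℝ≥0} (hv : v ≠ 0) :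
    sqHellinger (gaussianReal a v) (gaussianReal b v)
      = 2 - 2 * Real.exp (-(a - b)^2 / (8 * v)) := by
  have hvpos : (0:ℝ) < v := by positivity
  set p : ℝ → ℝ := gaussianPDFReal a v with hpdef
  set q : ℝ → ℝ := gaussianPDFReal b v with hqdef
  have hp0 : ∀ x, 0 < p x := fun x => gaussianPDFReal_pos a v x hv
  have hq0 : ∀ x, 0 < q x := fun x => gaussianPDFReal_pos b v x hv
  have hs0 : ∀ x, 0 < p x + q x := fun x => add_pos (hp0 x) (hq0 x)
  have hpm : Measurable p := measurable_gaussianPDFReal a v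
  have hqm : Measurable q := measurable_gaussianPDFReal b v
  set ν : Measure ℝ := gaussianReal a v + gaussianReal b v with hνdef
  have hν : ν = volume.withDensity (fun x => ENNReal.ofReal (p x + q x)) := by
    rw [hνdef, gaussianReal_of_var_ne_zero a hv, gaussianReal_of_var_ne_zero b hv,
      ← withDensity_add_left (measurable_gaussianPDF a v)]
    congr 1; funext x
    simp only [Pi.add_apply, gaussianPDF]
    exact (ENNReal.ofReal_add (gaussianPDFReal_nonneg a v x) (gaussianPDFReal_nonneg b v x)).symm
  have hmeasP : Measurable (fun x => ENNReal.ofReal (p x / (p x + q x))) :=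
    (hpm.div (hpm.add hqm)).ennreal_ofReal
  have hmeasQ : Measurable (fun x => ENNReal.ofReal (q x / (p x + q x))) :=
    (hqm.div (hpm.add hqm)).ennreal_ofReal
  have hP2 : gaussianReal a v = ν.withDensity (fun x => ENNReal.ofReal (p x / (p x + q x))) := by
    rw [hν, ← withDensity_mul _ (f := fun x => ENNReal.ofReal (p x + q x)) ((hpm.add hqm).ennreal_ofReal) hmeasP,
      gaussianReal_of_var_ne_zero a hv]
    congr 1; funext x
    simp only [Pi.mul_apply, gaussianPDF]
    rw [← ENNReal.ofReal_mul (hs0 x).le, mul_div_cancel₀ _ (hs0 x).ne']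
  have hQ2 : gaussianReal b v = ν.withDensity (fun x => ENNReal.ofReal (q x / (p x + q x))) := by
    rw [hν, ← withDensity_mul _ (f := fun x => ENNReal.ofReal (p x + q x)) ((hpm.add hqm).ennreal_ofReal) hmeasQ,
      gaussianReal_of_var_ne_zero b hv]
    congr 1; funext x
    simp only [Pi.mul_apply, gaussianPDF]
    rw [← ENNReal.ofReal_mul (hs0 x).le, mul_div_cancel₀ _ (hs0 x).ne']
  have hrnP : (gaussianReal a v).rnDeriv ν =ᵐ[ν] fun x => ENNReal.ofReal (p x / (p x + q x)) := by
    nth_rewrite 1 [hP2]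
    exact Measure.rnDeriv_withDensity ν hmeasP
  have hrnQ : (gaussianReal b v).rnDeriv ν =ᵐ[ν] fun x => ENNReal.ofReal (q x / (p x + q x)) := by
    nth_rewrite 1 [hQ2]
    exact Measure.rnDeriv_withDensity ν hmeasQ
  have h1 : sqHellinger (gaussianReal a v) (gaussianReal b v)
      = ∫ x, (Real.sqrt (p x / (p x + q x)) - Real.sqrt (q x / (p x + q x)))^2 ∂ν := by
    unfold sqHellinger
    apply integral_congr_ae
    filter_upwards [hrnP, hrnQ] with x h1 h2
    rw [h1, h2, ENNReal.toReal_ofReal (div_nonneg (hp0 x).le (hs0 x).le), ENNReal.toReal_ofReal (div_nonneg (hq0 x).le (hs0 x).le)]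
  rw [h1]
  have hν' : ν = volume.withDensity (fun x => ((p x + q x).toNNReal : ℝ≥0∞)) := by
    rw [hν]; simp [ENNReal.ofReal]
  have h2 : ∫ x, (Real.sqrt (p x / (p x + q x)) - Real.sqrt (q x / (p x + q x)))^2 ∂ν
      = ∫ x, ((p x + q x).toNNReal : ℝ) •
          ((Real.sqrt (p x / (p x + q x)) - Real.sqrt (q x / (p x + q x)))^2) := by
    rw [hν']
    exact integral_withDensity_eq_integral_smul ((hpm.add hqm).real_toNNReal) _
  rw [h2]
  have h3 : ∀ x : ℝ, ((p x + q x).toNNReal : ℝ) •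
      ((Real.sqrt (p x / (p x + q x)) - Real.sqrt (q x / (p x + q x)))^2)
      = (Real.sqrt (p x) - Real.sqrt (q x))^2 := by
    intro x
    have hs := hs0 x
    rw [smul_eq_mul, Real.coe_toNNReal _ hs.le, Real.sqrt_div (hp0 x).le,
      Real.sqrt_div (hq0 x).le, div_sub_div_same, div_pow, Real.sq_sqrt hs.le,
      mul_div_cancel₀ _ hs.ne']
  simp only [h3]
  -- now the volume integral
  set m : ℝ := (a + b) / 2 with hmdef
  set K : ℝ := Real.exp (-(a - b)^2 / (8 * v)) with hKdef
  have key : ∀ x : ℝ, Real.sqrt (p x) * Real.sqrt (q x) = K * gaussianPDFReal m v x := by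
    intro x
    rw [← Real.sqrt_mul (hp0 x).le]
    have hsq : p x * q x = (K * gaussianPDFReal m v x)^2 := by
      have hvne : (v:ℝ) ≠ 0 := hvpos.ne'
      have gen : ∀ c A B k M : ℝ, A + B = (k + M) + (k + M) →
          (c * Real.exp A) * (c * Real.exp B) = (Real.exp k * (c * Real.exp M))^2 := by
        intro c A B k M h
        have h1 : (c * Real.exp A) * (c * Real.exp B) = c^2 * Real.exp (A+B) := by
          rw [Real.exp_add]; ring
        rw [h1, h, Real.exp_add (k+M) (k+M), Real.exp_add k M]; ring
      simp only [hpdef, hqdef, hKdef, hmdef, gaussianPDFReal]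
      exact gen _ _ _ _ _ (by field_simp; ring)
    rw [hsq, Real.sqrt_sq (mul_nonneg (Real.exp_nonneg _) (gaussianPDFReal_nonneg m v x))]
  have hIp : Integrable p := integrable_gaussianPDFReal a v
  have hIq : Integrable q := integrable_gaussianPDFReal b v
  have hIm : Integrable (fun x => 2 * (K * gaussianPDFReal m v x)) :=
    ((integrable_gaussianPDFReal m v).const_mul K).const_mul 2
  have hfun : (fun x => (Real.sqrt (p x) - Real.sqrt (q x))^2)
      = fun x => (p x + q x) - 2 * (K * gaussianPDFReal m v x) := by
    funext x
    rw [sub_sq, Real.sq_sqrt (hp0 x).le, Real.sq_sqrt (hq0 x).le, mul_assoc, key x]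
    ring
  have hIpq : Integrable (fun x => p x + q x) := hIp.add hIq
  rw [hfun, integral_sub hIpq hIm, integral_add hIp hIq,
    integral_const_mul, integral_const_mul, hpdef, hqdef,
    integral_gaussianPDFReal_eq_one a hv, integral_gaussianPDFReal_eq_one b hv,
    integral_gaussianPDFReal_eq_one m hv]
  ring

/-- expectation of a constant -/

lemma FinDist.expect_const {X : Type*} (p : FinDist X) (c : ℝ) :
    p.expect (fun _ => c) = c := by
  unfold FinDist.expect
  rw [← Finset.sum_mul, p.sum_eq_one, one_mul]

lemma FinDist.expect_le {X : Type*} (p : FinDist X) {h h' : X → ℝ}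
    (hle : ∀ x, h x ≤ h' x) : p.expect h ≤ p.expect h' :=
  Finset.sum_le_sum fun x _ => mul_le_mul_of_nonneg_left (hle x) (p.nonneg x)

noncomputable def FinDist.pure {X : Type*} (x0 : X) : FinDist X :=
  letI := Classical.decEq X
  { support := {x0}
    w := fun y => if y = x0 then 1 else 0
    nonneg := fun x => by split <;> norm_num
    zero_of_not_mem := fun x hx => by
      simp only [Finset.mem_singleton] at hx
      simp [hx]
    sum_eq_one := by simp }

instance {X : Type*} [Nonempty X] : Nonempty (FinDist X) :=
  ⟨FinDist.pure (Classical.arbitrary X)⟩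

/-- local-to-global lemma for structured Gaussian bandits: for a
star-shaped class `F` of mean-reward functions with Gaussian reward noise of
variance `v ≥ 1/8`, the `ε`-localized DEC at scale `γ` dominates `ε` times the
global DEC at scale `4·e·ε·γ`. -/
theorem local_to_global_dec_gaussian {X : Type*} (v : ℝ≥0) (hv : (1 / 8 : ℝ≥0) ≤ v)
    (F : Set (X → ℝ)) (hF_mem : ∀ f ∈ F, ∀ x, f x ∈ Set.Icc (0 : ℝ) 1)
    (piOf : (X → ℝ) → X) (h_max : ∀ f ∈ F, ∀ x, f x ≤ f (piOf f))
    (h_star : ∀ f ∈ F, ∀ lam ∈ Set.Icc (0 : ℝ) 1, (fun x => lam * f x) ∈ F)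
    (ε : ℝ) (hε : ε ∈ Set.Icc (0 : ℝ) 1) (γ : ℝ) (hγ : 0 ≤ γ) :
    ε * (⨆ fbar : F, decoefGauss v (4 * Real.exp 1 * ε * γ) piOf F fbar.1) ≤
      ⨆ fbar : F, decoefGauss v γ piOf
        {f | f ∈ F ∧ f (piOf f) - ε ≤ fbar.1 (piOf fbar.1)} fbar.1 := by
  classical
  obtain ⟨hε0, hε1⟩ := hε
  have hvR : (1/8 : ℝ) ≤ (v : ℝ) := by exact_mod_cast hv
  have hv0 : v ≠ 0 := by
    intro h
    rw [h] at hvR; norm_num at hvR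
  by_cases hFne : F.Nonempty
  swap
  · rw [Set.not_nonempty_iff_eq_empty] at hFne
    have : IsEmpty (↥F) := Set.isEmpty_coe_sort.2 hFne
    rw [Real.iSup_of_isEmpty, Real.iSup_of_isEmpty, mul_zero]
  have hXne : Nonempty X := ⟨piOf (fun _ => 0)⟩
  have hFne' : Nonempty ↥F := hFne.to_subtype
  set γ' : ℝ := 4 * Real.exp 1 * ε * γ with hγ'def
  have hγ'0 : 0 ≤ γ' := by positivity
  -- Hellinger facts
  have hH0 : ∀ a b : ℝ, 0 ≤ sqHellinger (gaussianReal a v) (gaussianReal b v) := by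
    intro a b
    rw [sqHellinger_gaussianReal a b hv0]
    have h1 : Real.exp (-(a-b)^2 / (8*(v:ℝ))) ≤ 1 := by
      apply Real.exp_le_one_iff.2
      exact div_nonpos_of_nonpos_of_nonneg (neg_nonpos.2 (sq_nonneg _)) (by positivity)
    linarith
  have hH2 : ∀ a b : ℝ, sqHellinger (gaussianReal a v) (gaussianReal b v) ≤ 2 := by
    intro a b
    rw [sqHellinger_gaussianReal a b hv0]
    have := Real.exp_nonneg (-(a-b)^2 / (8*(v:ℝ)))
    linarith
  -- key Hellinger comparison
  have hKey : ∀ a b : ℝ, a ∈ Set.Icc (0:ℝ) 1 → b ∈ Set.Icc (0:ℝ) 1 →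
      γ * sqHellinger (gaussianReal (ε * a) v) (gaussianReal (ε * b) v)
        ≤ ε * (γ' * sqHellinger (gaussianReal a v) (gaussianReal b v)) := by
    intro a b ha hb
    rw [sqHellinger_gaussianReal _ _ hv0, sqHellinger_gaussianReal _ _ hv0]
    have h8v : (1:ℝ) ≤ 8 * v := by linarith
    have hab2 : (a - b)^2 ≤ 1 := by
      have h1 : |a - b| ≤ 1 := abs_sub_le_iff.2 ⟨by linarith [ha.1, ha.2, hb.1, hb.2],
        by linarith [ha.1, ha.2, hb.1, hb.2]⟩
      calc (a-b)^2 = |a-b|^2 := (sq_abs _).symm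
        _ ≤ 1^2 := pow_le_pow_left₀ (abs_nonneg _) h1 2
        _ = 1 := one_pow 2
    have e1 : -(ε*a - ε*b)^2 / (8*(v:ℝ)) = -(ε^2 * ((a-b)^2 / (8*(v:ℝ)))) := by
      field_simp
    have e2 : -(a-b)^2 / (8*(v:ℝ)) = -((a-b)^2 / (8*(v:ℝ))) := by ring
    rw [e1, e2]
    set t : ℝ := (a - b)^2 / (8 * (v:ℝ)) with htdef
    have ht0 : 0 ≤ t := div_nonneg (sq_nonneg _) (by linarith)
    have ht1 : t ≤ 1 := by
      rw [htdef, div_le_one (by linarith)]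
      linarith
    have hkey := exp_loc_ineq hε0 hε1 ht0 ht1
    have hγ'eq : ε * (γ' * (2 - 2 * Real.exp (-t)))
        = 2 * γ * (4 * Real.exp 1 * ε^2 * (1 - Real.exp (-t))) := by
      rw [hγ'def]; ring
    have hlhs : γ * (2 - 2 * Real.exp (-(ε^2 * t))) = 2 * γ * (1 - Real.exp (-(ε^2*t))) := by ring
    rw [hγ'eq, hlhs]
    exact mul_le_mul_of_nonneg_left hkey (by linarith)
  haveI := hXne
  haveI := hFne'
  -- expectation bounds
  have hexp_le_one : ∀ (p : FinDist X) (c : ℝ), 0 ≤ c → ∀ f ∈ F, ∀ r : X → ℝ,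
      (p.expect fun x => f (piOf f) - f x
        - c * sqHellinger (gaussianReal (f x) v) (gaussianReal (r x) v)) ≤ 1 := by
    intro p c hc f hf r
    calc p.expect (fun x => f (piOf f) - f x
        - c * sqHellinger (gaussianReal (f x) v) (gaussianReal (r x) v))
        ≤ p.expect (fun _ => (1:ℝ)) := p.expect_le (fun x => by
          have h1 := (hF_mem f hf (piOf f)).2
          have h2 := (hF_mem f hf x).1
          have h3 : 0 ≤ c * sqHellinger (gaussianReal (f x) v) (gaussianReal (r x) v) :=
            mul_nonneg hc (hH0 _ _)
          linarith)
      _ = 1 := p.expect_const 1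
  have hexp_ge : ∀ (p : FinDist X) (c : ℝ), 0 ≤ c → ∀ f ∈ F, ∀ r : X → ℝ,
      -(2*c) ≤ p.expect fun x => f (piOf f) - f x
        - c * sqHellinger (gaussianReal (f x) v) (gaussianReal (r x) v) := by
    intro p c hc f hf r
    calc -(2*c) = p.expect (fun _ => -(2*c)) := (p.expect_const _).symm
      _ ≤ _ := p.expect_le (fun x => by
          have h1 := h_max f hf x
          have h3 : c * sqHellinger (gaussianReal (f x) v) (gaussianReal (r x) v) ≤ c * 2 :=
            mul_le_mul_of_nonneg_left (hH2 _ _) hc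
          linarith)
  -- boundedness of inner sup families
  have hbddA : ∀ (G : Set (X → ℝ)), G ⊆ F → ∀ (c : ℝ), 0 ≤ c → ∀ r : X → ℝ, ∀ p : FinDist X,
      BddAbove (Set.range fun f : G => p.expect fun x =>
        f.1 (piOf f.1) - f.1 x - c * sqHellinger (gaussianReal (f.1 x) v) (gaussianReal (r x) v)) := by
    intro G hG c hc r p
    refine ⟨1, ?_⟩
    rintro y ⟨f, rfl⟩
    exact hexp_le_one p c hc f.1 (hG f.2) r
  -- dec ≤ 1 for nonempty G ⊆ F
  have hdec_le_one : ∀ (G : Set (X → ℝ)), G ⊆ F → G.Nonempty → ∀ (c : ℝ), 0 ≤ c → ∀ r : X → ℝ,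
      decoefGauss v c piOf G r ≤ 1 := by
    intro G hG hGne c hc r
    haveI : Nonempty ↥G := hGne.to_subtype
    unfold decoefGauss
    have hbdd : BddBelow (Set.range fun p : FinDist X => ⨆ f : G, p.expect fun x =>
        f.1 (piOf f.1) - f.1 x - c * sqHellinger (gaussianReal (f.1 x) v) (gaussianReal (r x) v)) := by
      refine ⟨-(2*c), ?_⟩
      rintro y ⟨p, rfl⟩
      obtain ⟨f0⟩ := (inferInstance : Nonempty ↥G)
      calc -(2*c) ≤ _ := hexp_ge p c hc f0.1 (hG f0.2) r
        _ ≤ _ := le_ciSup (hbddA G hG c hc r p) f0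
    obtain ⟨p0⟩ := (inferInstance : Nonempty (FinDist X))
    refine (ciInf_le hbdd p0).trans ?_
    exact ciSup_le fun f => hexp_le_one p0 c hc f.1 (hG f.2) r
  -- maximizer equality for scaled functions
  have hmax_eq : ∀ f ∈ F, (fun x => ε * f x) (piOf (fun x => ε * f x)) = ε * f (piOf f) := by
    intro f hf
    have hmem : (fun x => ε * f x) ∈ F := h_star f hf ε ⟨hε0, hε1⟩
    apply le_antisymm
    · exact mul_le_mul_of_nonneg_left (h_max f hf (piOf (fun x => ε * f x))) hε0
    · exact h_max _ hmem (piOf f)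
  -- main chain
  rw [Real.mul_iSup_of_nonneg hε0]
  apply ciSup_le
  intro g
  have hg : g.1 ∈ F := g.2
  have hgmem : (fun x => ε * g.1 x) ∈ F := h_star g.1 hg ε ⟨hε0, hε1⟩
  have hbddB : BddAbove (Set.range fun fbar : F => decoefGauss v γ piOf
      {f | f ∈ F ∧ f (piOf f) - ε ≤ fbar.1 (piOf fbar.1)} fbar.1) := by
    refine ⟨1, ?_⟩
    rintro y ⟨fbar, rfl⟩
    exact hdec_le_one {f | f ∈ F ∧ f (piOf f) - ε ≤ fbar.1 (piOf fbar.1)}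
      (fun f hf => hf.1) ⟨fbar.1, fbar.2, by linarith⟩ γ hγ fbar.1
  refine le_trans ?_ (le_ciSup hbddB ⟨fun x => ε * g.1 x, hgmem⟩)
  unfold decoefGauss
  rw [Real.mul_iInf_of_nonneg hε0]
  apply le_ciInf
  intro p
  have hbddBelow : BddBelow (Set.range fun p : FinDist X => ε * ⨆ f : F, p.expect fun x =>
      f.1 (piOf f.1) - f.1 x - γ' * sqHellinger (gaussianReal (f.1 x) v) (gaussianReal (g.1 x) v)) := by
    refine ⟨ε * (-(2*γ')), ?_⟩
    rintro y ⟨p', rfl⟩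
    apply mul_le_mul_of_nonneg_left ?_ hε0
    obtain ⟨f0⟩ := hFne'
    calc -(2*γ') ≤ _ := hexp_ge p' γ' hγ'0 f0.1 f0.2 g.1
      _ ≤ _ := le_ciSup (hbddA F subset_rfl γ' hγ'0 g.1 p') f0
  refine (ciInf_le hbddBelow p).trans ?_
  rw [Real.mul_iSup_of_nonneg hε0]
  apply ciSup_le
  intro f
  have hfF : f.1 ∈ F := f.2
  have hfLoc : (fun x => ε * f.1 x) ∈ {h : X → ℝ | h ∈ F ∧ h (piOf h) - ε
      ≤ (fun x => ε * g.1 x) (piOf (fun x => ε * g.1 x))} := by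
    refine ⟨h_star f.1 hfF ε ⟨hε0, hε1⟩, ?_⟩
    rw [hmax_eq f.1 hfF, hmax_eq g.1 hg]
    have h1 : ε * f.1 (piOf f.1) ≤ ε * 1 :=
      mul_le_mul_of_nonneg_left (hF_mem f.1 hfF (piOf f.1)).2 hε0
    have h2 : 0 ≤ ε * g.1 (piOf g.1) := mul_nonneg hε0 (hF_mem g.1 hg _).1
    linarith
  refine le_trans ?_ (le_ciSup (hbddA _ (fun h hh => hh.1) γ hγ _ p) ⟨_, hfLoc⟩)
  show ε * (p.expect fun x => f.1 (piOf f.1) - f.1 x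
        - γ' * sqHellinger (gaussianReal (f.1 x) v) (gaussianReal (g.1 x) v))
      ≤ p.expect fun x => ε * f.1 (piOf (fun x => ε * f.1 x)) - ε * f.1 x
        - γ * sqHellinger (gaussianReal (ε * f.1 x) v) (gaussianReal (ε * g.1 x) v)
  unfold FinDist.expect
  rw [Finset.mul_sum]
  apply Finset.sum_le_sum
  intro x hx
  rw [← mul_assoc, mul_comm ε (p.w x), mul_assoc]
  apply mul_le_mul_of_nonneg_left ?_ (p.nonneg x)
  have hme : ε * f.1 (piOf (fun x => ε * f.1 x)) = ε * f.1 (piOf f.1) := hmax_eq f.1 hfF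
  rw [hme]
  have hk := hKey (f.1 x) (g.1 x) (hF_mem f.1 hfF x) (hF_mem g.1 hg x)
  dsimp only
  have hexpand : ε * (f.1 (piOf f.1) - f.1 x
        - γ' * sqHellinger (gaussianReal (f.1 x) v) (gaussianReal (g.1 x) v))
      = ε * f.1 (piOf f.1) - ε * f.1 x
        - ε * (γ' * sqHellinger (gaussianReal (f.1 x) v) (gaussianReal (g.1 x) v)) := by ring
  rw [hexpand]
  linarith [hk]
end

section
/- Let Π be a set, R ≥ 1, and F a class of functions Π → [−R, R]. Let Z be a finite set, μ a probability distribution on Z, and for each z ∈ Z let f_z ∈ F and π_z ∈ Π; let ρ denote the law of π_z when z ∼ μ. Then for every γ > 0: E_{z∼μ}[ |f_z(π_z)| ] ≤ inf_{Δ>0} { 2Δ + 6·θ(F, Δ, γ^{−1}; ρ)·(log(max(Rγ, e)))²/γ } + γ·E_{z∼μ} E_{z'∼μ}[ (f_z(π_{z'}))² ], where z and z' are drawn independently from μ. -/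
open scoped Classical

/-- The scale-sensitive disagreement coefficient
`θ(G, Δ₀, ε₀; ρ)` where `ρ` is the law of `π z` for `z` drawn from the finitely
supported distribution `μ` on `Z`:
`max(1, sup{ (Δ²/ε²)·ρ({x : ∃ g ∈ G, |g x| > Δ ∧ E_{x'∼ρ}[g(x')²] ≤ ε²}) : Δ ≥ Δ₀, ε ≥ ε₀ })`. -/
noncomputable def disagreementCoef {X Z : Type*} [Fintype Z] (G : Set (X → ℝ))
    (Δ₀ ε₀ : ℝ) (μ : Z → ℝ) (π : Z → X) : ℝ :=
  max 1 (sSup {t : ℝ | ∃ Δ ε : ℝ, Δ₀ ≤ Δ ∧ ε₀ ≤ ε ∧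
    t = Δ ^ 2 / ε ^ 2 *
      ∑ z, if ∃ g ∈ G, Δ < |g (π z)| ∧ (∑ z', μ z' * g (π z') ^ 2) ≤ ε ^ 2
        then μ z else 0})

set_option maxHeartbeats 1000000

/-- generic decoupling lemma: the coupled value
`E_{z∼μ}[|f_z(π_z)|]` is controlled by the decoupled second moment
`E_{z,z'∼μ}[f_z(π_{z'})²]` at a price governed by the disagreement coefficient. -/
theorem decoupling_via_disagreement {X Z : Type*} [Fintype Z] (R : ℝ) (hR : 1 ≤ R)
    (F : Set (X → ℝ)) (hF_bdd : ∀ f ∈ F, ∀ x, f x ∈ Set.Icc (-R) R)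
    (μ : Z → ℝ) (hμ_nonneg : ∀ z, 0 ≤ μ z) (hμ_sum : (∑ z, μ z) = 1)
    (f : Z → X → ℝ) (hf_mem : ∀ z, f z ∈ F) (π : Z → X)
    (γ : ℝ) (hγ : 0 < γ) :
    (∑ z, μ z * |f z (π z)|) ≤
      (⨅ Δ : {Δ : ℝ // 0 < Δ},
        (2 * Δ.1 + 6 * disagreementCoef F Δ.1 γ⁻¹ μ π *
          Real.log (max (R * γ) (Real.exp 1)) ^ 2 / γ)) +
      γ * ∑ z, ∑ z', μ z * μ z' * f z (π z') ^ 2 := by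
  set M : ℝ := ∑ z, ∑ z', μ z * μ z' * f z (π z') ^ 2 with hMdef
  set L : ℝ := Real.log (max (R * γ) (Real.exp 1)) with hLdef
  set a : Z → ℝ := fun z => |f z (π z)| with hadef
  set e2 : Z → ℝ := fun z => ∑ z', μ z' * f z (π z') ^ 2 with he2def
  have ha0 : ∀ z, 0 ≤ a z := fun z => abs_nonneg _
  have haR : ∀ z, a z ≤ R := fun z =>
    abs_le.2 ⟨(hF_bdd _ (hf_mem z) _).1, (hF_bdd _ (hf_mem z) _).2⟩
  have he20 : ∀ z, 0 ≤ e2 z := fun z =>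
    Finset.sum_nonneg fun z' _ => mul_nonneg (hμ_nonneg z') (sq_nonneg _)
  have hMe2 : M = ∑ z, μ z * e2 z := by
    rw [hMdef]
    refine Finset.sum_congr rfl fun z _ => ?_
    rw [he2def, Finset.mul_sum]
    exact Finset.sum_congr rfl fun z' _ => by ring
  have hM0 : 0 ≤ M := by
    rw [hMe2]; exact Finset.sum_nonneg fun z _ => mul_nonneg (hμ_nonneg z) (he20 z)
  have he1 : (2:ℝ) ≤ Real.exp 1 := by have := Real.add_one_le_exp 1; linarith
  have hL1 : (1:ℝ) ≤ L := by
    rw [hLdef]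
    calc (1:ℝ) = Real.log (Real.exp 1) := (Real.log_exp 1).symm
    _ ≤ _ := Real.log_le_log (Real.exp_pos 1) (le_max_right _ _)
  -- the per-Δ bound
  have key : ∀ Δ : ℝ, 0 < Δ →
      (∑ z, μ z * a z) ≤
        2 * Δ + 6 * disagreementCoef F Δ γ⁻¹ μ π * L ^ 2 / γ + γ * M := by
    intro Δ hΔ
    set θ := disagreementCoef F Δ γ⁻¹ μ π with hθdef
    have hθ1 : (1:ℝ) ≤ θ := le_max_left _ _
    have hθ0 : (0:ℝ) < θ := lt_of_lt_of_le one_pos hθ1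
    have hγi : (0:ℝ) < γ⁻¹ := inv_pos.2 hγ
    -- the disagreement-coefficient bound
    have cor : ∀ Δ' ε' : ℝ, Δ ≤ Δ' → γ⁻¹ ≤ ε' →
        (∑ z, if Δ' < a z ∧ e2 z ≤ ε' ^ 2 then μ z else 0) ≤ θ * ε' ^ 2 / Δ' ^ 2 := by
      intro Δ' ε' hΔ' hε'
      have hΔ'0 : 0 < Δ' := lt_of_lt_of_le hΔ hΔ'
      have hε'0 : 0 < ε' := lt_of_lt_of_le hγi hε'
      have hbdd : BddAbove {t : ℝ | ∃ Δ'' ε'' : ℝ, Δ ≤ Δ'' ∧ γ⁻¹ ≤ ε'' ∧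
          t = Δ'' ^ 2 / ε'' ^ 2 *
            ∑ z, if ∃ g ∈ F, Δ'' < |g (π z)| ∧ (∑ z', μ z' * g (π z') ^ 2) ≤ ε'' ^ 2
              then μ z else 0} := by
        refine ⟨R ^ 2 * γ ^ 2, ?_⟩
        rintro t ⟨Δ'', ε'', h1, h2, rfl⟩
        have hΔ''0 : 0 < Δ'' := lt_of_lt_of_le hΔ h1
        have hε''0 : 0 < ε'' := lt_of_lt_of_le hγi h2
        by_cases hc : ∃ z, ∃ g ∈ F, Δ'' < |g (π z)| ∧ (∑ z', μ z' * g (π z') ^ 2) ≤ ε'' ^ 2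
        · obtain ⟨z0, g, hgF, hglt, _⟩ := hc
          have hgR : |g (π z0)| ≤ R :=
            abs_le.2 ⟨(hF_bdd g hgF _).1, (hF_bdd g hgF _).2⟩
          have hΔ''R : Δ'' ≤ R := le_of_lt (lt_of_lt_of_le hglt hgR)
          have hsum1 : (∑ z, if ∃ g ∈ F, Δ'' < |g (π z)| ∧
              (∑ z', μ z' * g (π z') ^ 2) ≤ ε'' ^ 2 then μ z else 0) ≤ 1 := by
            rw [← hμ_sum]
            refine Finset.sum_le_sum fun z _ => ?_
            split
            · exact le_rfl
            · exact hμ_nonneg z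
          have hsum0 : (0:ℝ) ≤ ∑ z, if ∃ g ∈ F, Δ'' < |g (π z)| ∧
              (∑ z', μ z' * g (π z') ^ 2) ≤ ε'' ^ 2 then μ z else 0 := by
            refine Finset.sum_nonneg fun z _ => ?_
            split
            · exact hμ_nonneg z
            · exact le_rfl
          have hc1 : Δ'' ^ 2 / ε'' ^ 2 ≤ R ^ 2 * γ ^ 2 := by
            rw [div_le_iff₀ (by positivity)]
            have hγε : 1 ≤ γ * ε'' := by
              have h2' := mul_le_mul_of_nonneg_left h2 hγ.le
              rwa [mul_inv_cancel₀ (ne_of_gt hγ)] at h2'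
            calc Δ'' ^ 2 ≤ R ^ 2 := pow_le_pow_left₀ hΔ''0.le hΔ''R 2
            _ = R ^ 2 * 1 := (mul_one _).symm
            _ ≤ R ^ 2 * (γ * ε'') ^ 2 := by
                refine mul_le_mul_of_nonneg_left ?_ (by positivity)
                nlinarith
            _ = R ^ 2 * γ ^ 2 * ε'' ^ 2 := by ring
          calc Δ'' ^ 2 / ε'' ^ 2 *
                (∑ z, if ∃ g ∈ F, Δ'' < |g (π z)| ∧
                  (∑ z', μ z' * g (π z') ^ 2) ≤ ε'' ^ 2 then μ z else 0)
              ≤ (R ^ 2 * γ ^ 2) * 1 := by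
                exact mul_le_mul hc1 hsum1 hsum0 (by positivity)
          _ = R ^ 2 * γ ^ 2 := mul_one _
        · push_neg at hc
          have : (∑ z, if ∃ g ∈ F, Δ'' < |g (π z)| ∧
              (∑ z', μ z' * g (π z') ^ 2) ≤ ε'' ^ 2 then μ z else 0) = 0 := by
            refine Finset.sum_eq_zero fun z _ => ?_
            rw [if_neg]
            intro h
            obtain ⟨g, hg1, hg2, hg3⟩ := h
            exact absurd hg3 (not_le.2 (hc z g hg1 hg2))
          rw [this, mul_zero]
          positivity
      have hmem : (Δ' ^ 2 / ε' ^ 2 *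
          ∑ z, if ∃ g ∈ F, Δ' < |g (π z)| ∧ (∑ z', μ z' * g (π z') ^ 2) ≤ ε' ^ 2
            then μ z else 0) ∈ {t : ℝ | ∃ Δ'' ε'' : ℝ, Δ ≤ Δ'' ∧ γ⁻¹ ≤ ε'' ∧
          t = Δ'' ^ 2 / ε'' ^ 2 *
            ∑ z, if ∃ g ∈ F, Δ'' < |g (π z)| ∧ (∑ z', μ z' * g (π z') ^ 2) ≤ ε'' ^ 2
              then μ z else 0} := ⟨Δ', ε', hΔ', hε', rfl⟩
      have h1 : Δ' ^ 2 / ε' ^ 2 *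
          (∑ z, if ∃ g ∈ F, Δ' < |g (π z)| ∧ (∑ z', μ z' * g (π z') ^ 2) ≤ ε' ^ 2
            then μ z else 0) ≤ θ := by
        refine le_trans (le_csSup hbdd hmem) ?_
        rw [hθdef, disagreementCoef]
        exact le_max_right _ _
      have h2 : (∑ z, if Δ' < a z ∧ e2 z ≤ ε' ^ 2 then μ z else 0) ≤
          (∑ z, if ∃ g ∈ F, Δ' < |g (π z)| ∧ (∑ z', μ z' * g (π z') ^ 2) ≤ ε' ^ 2
            then μ z else 0) := by
        refine Finset.sum_le_sum fun z _ => ?_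
        by_cases h : Δ' < a z ∧ e2 z ≤ ε' ^ 2
        · rw [if_pos h, if_pos ⟨f z, hf_mem z, h.1, h.2⟩]
        · rw [if_neg h]
          split
          · exact hμ_nonneg z
          · exact le_rfl
      have hEx0 : (0:ℝ) ≤ ∑ z, if ∃ g ∈ F, Δ' < |g (π z)| ∧
          (∑ z', μ z' * g (π z') ^ 2) ≤ ε' ^ 2 then μ z else 0 := by
        refine Finset.sum_nonneg fun z _ => ?_
        split
        · exact hμ_nonneg z
        · exact le_rfl
      have h3 : (∑ z, if ∃ g ∈ F, Δ' < |g (π z)| ∧ (∑ z', μ z' * g (π z') ^ 2) ≤ ε' ^ 2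
            then μ z else 0) ≤ θ * ε' ^ 2 / Δ' ^ 2 := by
        rw [le_div_iff₀ (by positivity : (0:ℝ) < Δ' ^ 2)]
        have heq : (∑ z, if ∃ g ∈ F, Δ' < |g (π z)| ∧
            (∑ z', μ z' * g (π z') ^ 2) ≤ ε' ^ 2 then μ z else 0) * Δ' ^ 2 =
            (Δ' ^ 2 / ε' ^ 2 * ∑ z, if ∃ g ∈ F, Δ' < |g (π z)| ∧
              (∑ z', μ z' * g (π z') ^ 2) ≤ ε' ^ 2 then μ z else 0) * ε' ^ 2 := by
          field_simp
        rw [heq]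
        exact mul_le_mul_of_nonneg_right h1 (by positivity)
      exact le_trans h2 h3
    -- split off the decoupled part
    set p : Z → Prop := fun z => 2 * Δ < a z ∧ γ * e2 z < a z with hpdef
    have hstep1 : (∑ z, μ z * a z) ≤ (∑ z, if p z then μ z * a z else 0) + (2 * Δ + γ * M) := by
      have hpt : ∀ z, μ z * a z ≤
          (if p z then μ z * a z else 0) + (μ z * (2 * Δ) + γ * (μ z * e2 z)) := by
        intro z
        have h1 := hμ_nonneg z
        have h2 := he20 z
        have n1 : 0 ≤ μ z * (2 * Δ) := mul_nonneg h1 (by linarith)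
        have n2 : 0 ≤ γ * (μ z * e2 z) := mul_nonneg hγ.le (mul_nonneg h1 h2)
        by_cases h : p z
        · rw [if_pos h]
          linarith
        · rw [if_neg h]
          rcases not_and_or.1 h with h' | h'
          · push_neg at h'
            have hb : μ z * a z ≤ μ z * (2 * Δ) := mul_le_mul_of_nonneg_left h' h1
            linarith
          · push_neg at h'
            have hb : μ z * a z ≤ μ z * (γ * e2 z) := mul_le_mul_of_nonneg_left h' h1
            have he : μ z * (γ * e2 z) = γ * (μ z * e2 z) := by ring
            linarith
      calc (∑ z, μ z * a z) ≤
          ∑ z, ((if p z then μ z * a z else 0) + (μ z * (2 * Δ) + γ * (μ z * e2 z))) :=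
            Finset.sum_le_sum fun z _ => hpt z
      _ = (∑ z, if p z then μ z * a z else 0) + (2 * Δ + γ * M) := by
          rw [Finset.sum_add_distrib, Finset.sum_add_distrib, ← Finset.sum_mul, hμ_sum,
            one_mul, ← Finset.mul_sum, ← hMe2]
    -- scales
    set A : ℝ := Real.exp 1 / γ with hAdef
    have hA0 : 0 < A := by positivity
    have hJex : ∃ n : ℕ, R ≤ A * (3/2:ℝ) ^ n := by
      obtain ⟨n, hn⟩ := pow_unbounded_of_one_lt (R / A) (by norm_num : (1:ℝ) < 3/2)
      refine ⟨n, ?_⟩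
      rw [div_lt_iff₀ hA0] at hn
      nlinarith
    set J := Nat.find hJex with hJdef
    have hJspec : R ≤ A * (3/2:ℝ) ^ J := Nat.find_spec hJex
    -- numeric bound
    have hnum : Real.exp 1 + 9/4 * (J:ℝ) ≤ 6 * L ^ 2 := by
      rcases Nat.eq_zero_or_pos J with hJ0 | hJpos
      · rw [hJ0]
        push_cast
        nlinarith [Real.exp_one_lt_d9, hL1]
      · obtain ⟨m, hm⟩ : ∃ m, J = m + 1 := ⟨J - 1, (Nat.succ_pred_eq_of_pos hJpos).symm⟩
        have hmin : ¬ (R ≤ A * (3/2:ℝ) ^ m) := Nat.find_min hJex (by omega)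
        push_neg at hmin
        have hlog32 : (1:ℝ)/3 ≤ Real.log (3/2) := by
          rw [Real.le_log_iff_exp_le (by norm_num : (0:ℝ) < 3/2)]
          have h3 : Real.exp (1/3) ^ 3 = Real.exp 1 := by
            rw [← Real.exp_nat_mul]
            norm_num
          nlinarith [Real.exp_pos (1/3:ℝ), Real.exp_one_lt_d9, h3,
            sq_nonneg (Real.exp (1/3) - 3/2), sq_nonneg (Real.exp (1/3) + 3/2)]
        have h2 : Real.exp 1 * (3/2:ℝ) ^ m < R * γ := by
          have : A * (3/2:ℝ) ^ m * γ < R * γ :=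
            mul_lt_mul_of_pos_right hmin hγ
          rw [hAdef] at this
          calc Real.exp 1 * (3/2:ℝ) ^ m = Real.exp 1 / γ * (3/2:ℝ) ^ m * γ := by
                field_simp
          _ < R * γ := this
        have h3 : Real.log (Real.exp 1 * (3/2:ℝ) ^ m) < Real.log (R * γ) :=
          Real.log_lt_log (by positivity) h2
        rw [Real.log_mul (by positivity) (by positivity), Real.log_exp, Real.log_pow] at h3
        have h4 : Real.log (R * γ) ≤ L := by
          rw [hLdef]
          exact Real.log_le_log (by positivity) (le_max_left _ _)
        have hm3 : (m:ℝ) * ((1:ℝ)/3) ≤ (m:ℝ) * Real.log (3/2) :=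
          mul_le_mul_of_nonneg_left hlog32 (Nat.cast_nonneg m)
        have hmL : (m:ℝ) ≤ 3 * (L - 1) := by
          push_cast at h3 ⊢
          nlinarith
        have hJL : (J:ℝ) ≤ 3 * L - 2 := by
          rw [hm]
          push_cast
          linarith
        nlinarith [Real.exp_one_lt_d9, hL1, sq_nonneg (L - 1)]
    -- bucket bound
    have hbucket : ∀ j : ℕ,
        (∑ z, if p z ∧ A * (3/2:ℝ) ^ j < a z ∧ a z ≤ A * (3/2:ℝ) ^ (j+1)
          then μ z * a z else 0) ≤ 9/4 * θ / γ := by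
      intro j
      set tj : ℝ := A * (3/2:ℝ) ^ j with htjdef
      set tj1 : ℝ := A * (3/2:ℝ) ^ (j+1) with htj1def
      have htj0 : 0 < tj := by positivity
      have htj10 : 0 < tj1 := by positivity
      have hratio : tj1 = 3/2 * tj := by
        rw [htjdef, htj1def, pow_succ]; ring
      have htj1γ : 1/γ ≤ tj1 := by
        rw [div_le_iff₀ hγ]
        have hpw : (1:ℝ) ≤ (3/2:ℝ) ^ (j+1) := one_le_pow₀ (by norm_num)
        have : tj1 * γ = Real.exp 1 * (3/2:ℝ) ^ (j+1) := by
          rw [htj1def, hAdef]; field_simp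
        rw [this]
        nlinarith
      set ε' : ℝ := Real.sqrt (tj1 / γ) with hε'def
      have hε'sq : ε' ^ 2 = tj1 / γ := Real.sq_sqrt (by positivity)
      have hε'γ : γ⁻¹ ≤ ε' := by
        rw [hε'def, Real.le_sqrt (by positivity) (by positivity)]
        calc (γ⁻¹) ^ 2 = (1/γ) * γ⁻¹ := by rw [one_div]; ring
        _ ≤ tj1 * γ⁻¹ := mul_le_mul_of_nonneg_right htj1γ (inv_pos.2 hγ).le
        _ = tj1 / γ := by rw [div_eq_mul_inv]
      set Δ' : ℝ := max tj Δ with hΔ'def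
      have hΔΔ' : Δ ≤ Δ' := le_max_right _ _
      have hΔ'tj : tj ≤ Δ' := le_max_left _ _
      have hΔ'0 : 0 < Δ' := lt_of_lt_of_le htj0 hΔ'tj
      have hsub : (∑ z, if p z ∧ tj < a z ∧ a z ≤ tj1 then μ z else 0) ≤
          (∑ z, if Δ' < a z ∧ e2 z ≤ ε' ^ 2 then μ z else 0) := by
        refine Finset.sum_le_sum fun z _ => ?_
        by_cases h : p z ∧ tj < a z ∧ a z ≤ tj1
        · obtain ⟨⟨hp1, hp2⟩, hb1, hb2⟩ := h
          have hc1 : Δ' < a z := by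
            rw [hΔ'def, max_lt_iff]
            exact ⟨hb1, by linarith⟩
          have hc2 : e2 z ≤ ε' ^ 2 := by
            rw [hε'sq, le_div_iff₀ hγ]
            nlinarith
          rw [if_pos ⟨⟨hp1, hp2⟩, hb1, hb2⟩, if_pos ⟨hc1, hc2⟩]
        · rw [if_neg h]
          split
          · exact hμ_nonneg _
          · exact le_rfl
      calc (∑ z, if p z ∧ tj < a z ∧ a z ≤ tj1 then μ z * a z else 0)
          ≤ ∑ z, tj1 * (if p z ∧ tj < a z ∧ a z ≤ tj1 then μ z else 0) := by
            refine Finset.sum_le_sum fun z _ => ?_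
            by_cases h : p z ∧ tj < a z ∧ a z ≤ tj1
            · rw [if_pos h, if_pos h]
              nlinarith [hμ_nonneg z, h.2.2, ha0 z]
            · rw [if_neg h, if_neg h, mul_zero]
      _ = tj1 * (∑ z, if p z ∧ tj < a z ∧ a z ≤ tj1 then μ z else 0) :=
            (Finset.mul_sum _ _ _).symm
      _ ≤ tj1 * (θ * ε' ^ 2 / Δ' ^ 2) :=
            mul_le_mul_of_nonneg_left (le_trans hsub (cor Δ' ε' hΔΔ' hε'γ)) htj10.le
      _ ≤ 9/4 * θ / γ := by
            rw [hε'sq]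
            have h1 : θ * (tj1 / γ) / Δ' ^ 2 ≤ θ * (tj1 / γ) / tj ^ 2 := by
              apply div_le_div_of_nonneg_left (by positivity) (by positivity)
              exact pow_le_pow_left₀ htj0.le hΔ'tj 2
            calc tj1 * (θ * (tj1 / γ) / Δ' ^ 2) ≤ tj1 * (θ * (tj1 / γ) / tj ^ 2) :=
                  mul_le_mul_of_nonneg_left h1 htj10.le
            _ = 9/4 * θ / γ := by
                rw [hratio]
                field_simp
                ring
    -- coverage of the peeled part
    have hcover : (∑ z, if p z then μ z * a z else 0) ≤
        (∑ z, if p z ∧ a z ≤ A then μ z * a z else 0) +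
        ∑ j ∈ Finset.range J, ∑ z,
          if p z ∧ A * (3/2:ℝ) ^ j < a z ∧ a z ≤ A * (3/2:ℝ) ^ (j+1)
            then μ z * a z else 0 := by
      rw [Finset.sum_comm, ← Finset.sum_add_distrib]
      refine Finset.sum_le_sum fun z _ => ?_
      have hnn : ∀ j : ℕ, (0:ℝ) ≤
          if p z ∧ A * (3/2:ℝ) ^ j < a z ∧ a z ≤ A * (3/2:ℝ) ^ (j+1)
            then μ z * a z else 0 := by
        intro j
        split
        · exact mul_nonneg (hμ_nonneg z) (ha0 z)
        · exact le_rfl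
      have hsnn : (0:ℝ) ≤ ∑ j ∈ Finset.range J,
          if p z ∧ A * (3/2:ℝ) ^ j < a z ∧ a z ≤ A * (3/2:ℝ) ^ (j+1)
            then μ z * a z else 0 := Finset.sum_nonneg fun j _ => hnn j
      by_cases hp : p z
      · by_cases hlow : a z ≤ A
        · rw [if_pos hp, if_pos ⟨hp, hlow⟩]
          linarith
        · push_neg at hlow
          have hJ1 : 1 ≤ J := by
            by_contra hcon
            push_neg at hcon
            interval_cases J
            · rw [pow_zero, mul_one] at hJspec
              exact absurd (le_trans (haR z) hJspec) (not_le.2 hlow)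
          have hqw : a z ≤ A * (3/2:ℝ) ^ ((J - 1) + 1) := by
            have hJe : J - 1 + 1 = J := by omega
            rw [hJe]
            exact le_trans (haR z) hJspec
          have hqex : ∃ n, a z ≤ A * (3/2:ℝ) ^ (n + 1) := ⟨J - 1, hqw⟩
          set j0 := Nat.find hqex with hj0def
          have hj0spec : a z ≤ A * (3/2:ℝ) ^ (j0 + 1) := Nat.find_spec hqex
          have hj0lt : j0 < J := by
            have : j0 ≤ J - 1 := Nat.find_le hqw
            omega
          have hj0low : A * (3/2:ℝ) ^ j0 < a z := by
            rcases Nat.eq_zero_or_pos j0 with h0 | hpos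
            · rw [h0, pow_zero, mul_one]
              exact hlow
            · obtain ⟨k, hk⟩ : ∃ k, j0 = k + 1 :=
                ⟨j0 - 1, (Nat.succ_pred_eq_of_pos hpos).symm⟩
              have hnm := Nat.find_min hqex (show k < j0 by omega)
              push_neg at hnm
              rw [hk]
              exact hnm
          have hterm : (if p z ∧ A * (3/2:ℝ) ^ j0 < a z ∧ a z ≤ A * (3/2:ℝ) ^ (j0+1)
              then μ z * a z else 0) = μ z * a z := if_pos ⟨hp, hj0low, hj0spec⟩
          have hle : μ z * a z ≤ ∑ j ∈ Finset.range J,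
              if p z ∧ A * (3/2:ℝ) ^ j < a z ∧ a z ≤ A * (3/2:ℝ) ^ (j+1)
                then μ z * a z else 0 := by
            calc μ z * a z = (if p z ∧ A * (3/2:ℝ) ^ j0 < a z ∧ a z ≤ A * (3/2:ℝ) ^ (j0+1)
                then μ z * a z else 0) := hterm.symm
            _ ≤ _ := Finset.single_le_sum (fun j _ => hnn j) (Finset.mem_range.2 hj0lt)
          rw [if_pos hp, if_neg (show ¬(p z ∧ a z ≤ A) from
            fun hh => absurd hh.2 (not_le.2 hlow))]
          linarith
      · rw [if_neg hp, if_neg (show ¬(p z ∧ a z ≤ A) from fun hh => hp hh.1)]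
        linarith
    -- low part
    have hlow : (∑ z, if p z ∧ a z ≤ A then μ z * a z else 0) ≤ A := by
      calc (∑ z, if p z ∧ a z ≤ A then μ z * a z else 0) ≤ ∑ z, μ z * A := by
            refine Finset.sum_le_sum fun z _ => ?_
            by_cases h : p z ∧ a z ≤ A
            · rw [if_pos h]
              exact mul_le_mul_of_nonneg_left h.2 (hμ_nonneg z)
            · rw [if_neg h]
              exact mul_nonneg (hμ_nonneg z) hA0.le
      _ = A := by rw [← Finset.sum_mul, hμ_sum, one_mul]
    -- high part
    have hhigh : (∑ j ∈ Finset.range J, ∑ z,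
        if p z ∧ A * (3/2:ℝ) ^ j < a z ∧ a z ≤ A * (3/2:ℝ) ^ (j+1)
          then μ z * a z else 0) ≤ (J:ℝ) * (9/4 * θ / γ) := by
      calc (∑ j ∈ Finset.range J, ∑ z,
          if p z ∧ A * (3/2:ℝ) ^ j < a z ∧ a z ≤ A * (3/2:ℝ) ^ (j+1)
            then μ z * a z else 0) ≤ ∑ _j ∈ Finset.range J, 9/4 * θ / γ :=
            Finset.sum_le_sum fun j _ => hbucket j
      _ = (J:ℝ) * (9/4 * θ / γ) := by
            rw [Finset.sum_const, Finset.card_range, nsmul_eq_mul]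
    -- combine
    have hfin : A + (J:ℝ) * (9/4 * θ / γ) ≤ 6 * θ * L ^ 2 / γ := by
      rw [hAdef]
      have h1 : Real.exp 1 + (J:ℝ) * (9/4 * θ) ≤ 6 * θ * L ^ 2 := by
        nlinarith [mul_le_mul_of_nonneg_left hnum hθ0.le, hθ1, Real.exp_pos 1,
          (Nat.cast_nonneg J : (0:ℝ) ≤ (J:ℝ))]
      calc Real.exp 1 / γ + (J:ℝ) * (9/4 * θ / γ) =
            (Real.exp 1 + (J:ℝ) * (9/4 * θ)) / γ := by field_simp
      _ ≤ 6 * θ * L ^ 2 / γ := by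
            exact (div_le_div_iff_of_pos_right hγ).2 h1
    calc (∑ z, μ z * a z) ≤ (∑ z, if p z then μ z * a z else 0) + (2 * Δ + γ * M) := hstep1
    _ ≤ (A + (J:ℝ) * (9/4 * θ / γ)) + (2 * Δ + γ * M) := by
          have := le_trans hcover (add_le_add hlow hhigh)
          linarith
    _ ≤ 6 * θ * L ^ 2 / γ + (2 * Δ + γ * M) := by linarith
    _ = 2 * Δ + 6 * θ * L ^ 2 / γ + γ * M := by ring
  -- conclude via the infimum
  have hinf : (∑ z, μ z * a z) - γ * M ≤
      ⨅ Δ : {Δ : ℝ // 0 < Δ},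
        (2 * Δ.1 + 6 * disagreementCoef F Δ.1 γ⁻¹ μ π * L ^ 2 / γ) := by
    have : Nonempty {Δ : ℝ // 0 < Δ} := ⟨⟨1, one_pos⟩⟩
    refine le_ciInf fun Δ => ?_
    have := key Δ.1 Δ.2
    linarith
  linarith
end
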